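/- arXiv:2510.03924 — 8 statements merged into one kernel-verified Lean document; each statement's English description precedes it below -/
import Mathlib

section
/- Let n ≥ 3 be an odd integer and let A be an n×n real symmetric matrix with entries a_{ij} > 0 whenever i - j ≡ ±1 (mod n) and a_{ij} = 0 otherwise. Then det A = 2 · ∏_{i=1}^{n} a_{i,i+1} (indices mod n), which is positive; in particular A is nonsingular. -/
/-!
In the Leibniz expansion of `det A`, a permutation `σ` contributes only if `σ i = i ± 1` for
every `i`. Summing the displacements `σ i - i` over `ZMod n` gives `0`, so if `k` of them are
`+1` then `n ∣ 2k`; as `n` is odd, `k = 0` or `k = n`, i.e. `σ` is one of the two rotations.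
Both rotations are `n`-cycles, hence even, and by symmetry both contribute `∏ i, a_{i,i+1}`.
-/
open Equiv Finset

theorem Equiv.Perm.sum_apply_sub_eq_zero {G : Type*} [AddCommGroup G] [Fintype G] (σ : Perm G) :
    ∑ i, (σ i - i) = 0 := by
  rw [sum_sub_distrib, sub_eq_zero]
  exact Equiv.sum_comp σ id

theorem Odd.eq_zero_or_eq_of_dvd_two_mul {n k : ℕ} (hodd : Odd n) (hk : k ≤ n) (h : n ∣ 2 * k) :
    k = 0 ∨ k = n := by
  have hdvd : n ∣ k := hodd.coprime_two_right.dvd_of_dvd_mul_left h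
  rcases k.eq_zero_or_pos with hk0 | hk0
  · exact .inl hk0
  · exact .inr (le_antisymm hk (Nat.le_of_dvd hk0 hdvd))

namespace ZMod

variable {n : ℕ} [NeZero n]

theorem isCycle_addRight_one (hn : 1 < n) : (Equiv.addRight (1 : ZMod n)).IsCycle :=
  have : Fact (1 < n) := ⟨hn⟩
  ⟨0, by simp, fun y _ => ⟨(y.val : ℤ), by simp⟩⟩

theorem sign_addRight_one (hn : 1 < n) : Perm.sign (Equiv.addRight (1 : ZMod n)) = -(-1) ^ n := by
  have : Fact (1 < n) := ⟨hn⟩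
  have hsupp : (Equiv.addRight (1 : ZMod n)).support = univ := by ext; simp
  rw [(isCycle_addRight_one hn).sign, hsupp, card_univ, ZMod.card]

theorem sign_addRight_neg_one (hn : 1 < n) :
    Perm.sign (Equiv.addRight (-1 : ZMod n)) = -(-1) ^ n := by
  rw [← addRight_symm, Perm.sign_symm, sign_addRight_one hn]

theorem eq_addRight_one_or_neg_one (hodd : Odd n) {σ : Perm (ZMod n)}
    (hσ : ∀ i, σ i = i + 1 ∨ σ i = i - 1) :
    σ = Equiv.addRight 1 ∨ σ = Equiv.addRight (-1) := by
  classical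
  set S := ({i | σ i = i + 1} : Finset (ZMod n))
  have hS : ((2 * #S : ℕ) : ZMod n) = 0 :=
    calc ((2 * #S : ℕ) : ZMod n) = ∑ i ∈ S, 2 := by simp [mul_comm]
      _ = ∑ i, (if σ i = i + 1 then 2 else 0) := sum_filter _ _
      _ = ∑ i, (σ i - i + 1) := by
        refine sum_congr rfl fun i _ => ?_
        split_ifs with h
        · rw [h]; ring
        · rw [(hσ i).resolve_left h]; ring
      _ = 0 := by simp [sum_add_distrib, σ.sum_apply_sub_eq_zero]
  rw [ZMod.natCast_eq_zero_iff] at hS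
  rcases hodd.eq_zero_or_eq_of_dvd_two_mul (card_le_univ S |>.trans_eq (ZMod.card n)) hS with h | h
  · right
    ext i
    have hi : i ∉ S := card_eq_zero.mp h ▸ notMem_empty i
    have hne : σ i ≠ i + 1 := by simpa [S] using hi
    simp [(hσ i).resolve_left hne, sub_eq_add_neg]
  · left
    ext i
    have : i ∈ S := (eq_univ_of_card S (h.trans (ZMod.card n).symm)).symm ▸ mem_univ i
    simpa [S] using this

theorem apply_eq_add_one_or_sub_one_of_prod_ne_zero {R : Type*} [CommMonoidWithZero R]
    {A : Matrix (ZMod n) (ZMod n) R} (hA : ∀ i j, ¬(j = i + 1 ∨ j = i - 1) → A i j = 0)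
    {σ : Perm (ZMod n)} (hσ : ∏ i, A (σ i) i ≠ 0) (i : ZMod n) : σ i = i + 1 ∨ σ i = i - 1 := by
  have : A (σ i) i ≠ 0 := fun h => hσ (prod_eq_zero (mem_univ i) h)
  rcases not_not.mp (mt (hA (σ i) i) this) with h | h
  · exact .inr (eq_sub_of_add_eq h.symm)
  · exact .inl (sub_eq_iff_eq_add.mp h.symm)

theorem det_eq_of_cycle_support {R : Type*} [CommRing R] (hn : 2 < n) (hodd : Odd n)
    (A : Matrix (ZMod n) (ZMod n) R) (hA : ∀ i j, ¬(j = i + 1 ∨ j = i - 1) → A i j = 0) :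
    A.det = ∏ i, A (i + 1) i + ∏ i, A i (i + 1) := by
  have : Fact (2 < n) := ⟨hn⟩
  have hshift : Equiv.addRight (1 : ZMod n) ≠ Equiv.addRight (-1) := fun h =>
    neg_one_ne_one (by simpa using (congrArg (· 0) h).symm)
  have hvanish : ∀ σ : Perm (ZMod n), σ ≠ Equiv.addRight 1 ∧ σ ≠ Equiv.addRight (-1) →
      Perm.sign σ • ∏ i, A (σ i) i = 0 := by
    rintro σ ⟨h1, h2⟩
    suffices ∏ i, A (σ i) i = 0 by rw [this, smul_zero]
    by_contra hne
    rcases eq_addRight_one_or_neg_one hodd (apply_eq_add_one_or_sub_one_of_prod_ne_zero hA hne)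
      with h | h
    exacts [h1 h, h2 h]
  rw [Matrix.det_apply, Fintype.sum_eq_add _ _ hshift hvanish, sign_addRight_one (by omega),
    sign_addRight_neg_one (by omega), hodd.neg_one_pow, neg_neg, one_smul, one_smul]
  congr 1
  exact (Equiv.prod_comp (Equiv.addRight 1) _).symm.trans (by simp)

end ZMod

/-- For odd `n ≥ 3` and a real symmetric `n × n` matrix whose support is exactly the
adjacency pattern of the `n`-cycle (positive entries on cycle edges, zero elsewhere),
the determinant equals `2 · ∏ i, a_{i,i+1}`, which is positive; in particular `A` is
nonsingular. -/
theorem cycle_pattern_det (n : ℕ) [NeZero n] (hn : 3 ≤ n) (hodd : Odd n)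
    (A : Matrix (ZMod n) (ZMod n) ℝ) (hsymm : A.IsSymm)
    (hpos : ∀ i j : ZMod n, (j = i + 1 ∨ j = i - 1) → 0 < A i j)
    (hzero : ∀ i j : ZMod n, ¬(j = i + 1 ∨ j = i - 1) → A i j = 0) :
    A.det = 2 * ∏ i : ZMod n, A i (i + 1) ∧ 0 < A.det ∧ A.det ≠ 0 := by
  have hprod : 0 < ∏ i : ZMod n, A i (i + 1) := prod_pos fun i _ => hpos i (i + 1) (.inl rfl)
  have hdet : A.det = 2 * ∏ i, A i (i + 1) := by
    rw [ZMod.det_eq_of_cycle_support hn hodd A hzero, two_mul]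
    congr 1
    exact prod_congr rfl fun i _ => hsymm.apply i (i + 1)
  have hdet_pos : 0 < A.det := hdet ▸ by positivity
  exact ⟨hdet, hdet_pos, hdet_pos.ne'⟩
end

section
/- Let n ≥ 3 be an odd integer. Every n×n real symmetric matrix A with a_{ij} > 0 whenever i - j ≡ ±1 (mod n) and a_{ij} = 0 otherwise has the same signature as the adjacency matrix of the n-cycle: ((n+1)/2, (n-1)/2) if n ≡ 1 (mod 4), and ((n-1)/2, (n+1)/2) if n ≡ 3 (mod 4). -/
/-!
By Sylvester's law of inertia (`QuadraticForm.sigPos_of_equiv_weightedSumSquares`) the signature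
of `A` can be read off any diagonalization of its quadratic form by a linear change of
coordinates. With `n = 2K + 1` and `a t = A t (t + 1) > 0` that form is
`2 ∑ₜ a t x t x (t + 1)`, indices mod `n`. Splitting off the edges `(2j, 2j + 1)`, `j < K`, one
at a time as hyperbolic terms `2 a u v = a/2 (u + v)² - a/2 (u - v)²` pushes the closing edge
`x (2K) x 0` along the even vertices, each step multiplying its weight by
`-a (2j + 1) / a (2j)`. What remains at the end is `2 c x (2K)²` with `c` of sign `(-1)^K`, so the
signature is `(K + 1, K)` for even `K` and `(K, K + 1)` for odd `K`. The new coordinates are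
triangular in the old ones, hence independent.
-/

open Finset Matrix QuadraticMap

section Signature

variable {m ι : Type*} [Fintype m] [DecidableEq m] [Fintype ι] {A : Matrix m m ℝ}

lemma Matrix.toQuadraticForm'_equivalent_weightedSumSquares {w : ι → ℝ}
    (L : (m → ℝ) ≃ₗ[ℝ] (ι → ℝ)) (hL : ∀ x, x ⬝ᵥ A *ᵥ x = ∑ i, w i * L x i ^ 2) :
    A.toQuadraticForm'.Equivalent (weightedSumSquares ℝ w) :=
  ⟨{ toLinearEquiv := L
     map_app' := fun x => by
       rw [weightedSumSquares_apply, toQuadraticForm', LinearMap.BilinMap.toQuadraticMap_apply,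
         toLinearMap₂'_apply', hL x]
       simp [pow_two] }⟩

namespace Matrix.IsHermitian

lemma dotProduct_mulVec_eq_sum_eigenvalues (hA : A.IsHermitian) (x : m → ℝ) :
    x ⬝ᵥ A *ᵥ x =
      ∑ i, hA.eigenvalues i * (star (hA.eigenvectorUnitary : Matrix m m ℝ) *ᵥ x) i ^ 2 := by
  set U : Matrix m m ℝ := (hA.eigenvectorUnitary : Matrix m m ℝ)
  have hA' : A = U * diagonal hA.eigenvalues * star U := by
    simpa [Unitary.conjStarAlgAut_apply] using hA.spectral_theorem
  have hstar : star U = Uᵀ := by ext; simp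
  conv_lhs => rw [hA', ← mulVec_mulVec, ← mulVec_mulVec, dotProduct_mulVec, ← mulVec_transpose,
    ← hstar]
  simp [dotProduct, mulVec_diagonal, pow_two, mul_left_comm]

theorem card_eigenvalues_pos_neg_eq_of_linearEquiv (hA : A.IsHermitian) (w : ι → ℝ)
    (L : (m → ℝ) ≃ₗ[ℝ] (ι → ℝ)) (hL : ∀ x, x ⬝ᵥ A *ᵥ x = ∑ i, w i * L x i ^ 2) :
    Fintype.card {i // 0 < hA.eigenvalues i} = Fintype.card {i // 0 < w i} ∧
      Fintype.card {i // hA.eigenvalues i < 0} = Fintype.card {i // w i < 0} := by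
  have hw := toQuadraticForm'_equivalent_weightedSumSquares L hL
  have heig := toQuadraticForm'_equivalent_weightedSumSquares
    (UnitaryGroup.toLinearEquiv (star hA.eigenvectorUnitary)) hA.dotProduct_mulVec_eq_sum_eigenvalues
  simp only [Fintype.card_subtype, ← Set.ncard_coe_finset, coe_filter, mem_univ, true_and]
  rw [← QuadraticForm.sigPos_of_equiv_weightedSumSquares heig,
    ← QuadraticForm.sigPos_of_equiv_weightedSumSquares hw,
    ← QuadraticForm.sigNeg_of_equiv_weightedSumSquares heig,
    ← QuadraticForm.sigNeg_of_equiv_weightedSumSquares hw]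
  exact ⟨rfl, rfl⟩

end Matrix.IsHermitian

end Signature

lemma ZMod.sum_univ_eq_sum_range {M : Type*} [AddCommMonoid M] (n : ℕ) [NeZero n]
    (f : ZMod n → M) : ∑ t, f t = ∑ t ∈ range n, f t :=
  sum_nbij' ZMod.val Nat.cast (by simp [ZMod.val_lt]) (by simp) (by simp)
    (fun t ht => ZMod.val_cast_of_lt (mem_range.1 ht)) (by simp)

noncomputable section

namespace CyclePattern

lemma dotProduct_mulVec_eq_sum_cycle {n : ℕ} [NeZero n] (hn : 3 ≤ n)
    {A : Matrix (ZMod n) (ZMod n) ℝ} (hA : A.IsSymm)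
    (hzero : ∀ i j : ZMod n, ¬(j = i + 1 ∨ j = i - 1) → A i j = 0) (x : ZMod n → ℝ) :
    x ⬝ᵥ A *ᵥ x = ∑ t, 2 * A t (t + 1) * x t * x (t + 1) := by
  have hne : ∀ t : ZMod n, t + 1 ≠ t - 1 := by
    intro t h
    have h2 : ((2 : ℕ) : ZMod n) = 0 := by
      rw [← sub_eq_zero.2 h]; push_cast; ring
    rw [ZMod.natCast_eq_zero_iff] at h2
    exact absurd (Nat.le_of_dvd two_pos h2) (by omega)
  have hrow : ∀ t, (A *ᵥ x) t = A t (t + 1) * x (t + 1) + A t (t - 1) * x (t - 1) := fun t =>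
    Fintype.sum_eq_add _ _ (hne t) fun s hs => by
      change A t s * x s = 0
      rw [hzero t s (by tauto), zero_mul]
  have hback : ∑ t, x t * (A t (t - 1) * x (t - 1)) = ∑ t, x (t + 1) * (A (t + 1) t * x t) :=
    (Fintype.sum_equiv (Equiv.addRight 1) _ _ fun t => by simp).symm
  calc x ⬝ᵥ A *ᵥ x
      = ∑ t, x t * (A t (t + 1) * x (t + 1)) + ∑ t, x t * (A t (t - 1) * x (t - 1)) := by
        simp only [dotProduct, hrow, mul_add, sum_add_distrib]
    _ = ∑ t, 2 * A t (t + 1) * x t * x (t + 1) := by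
        rw [hback, ← sum_add_distrib]
        refine sum_congr rfl fun t _ => ?_
        rw [hA.apply t (t + 1)]
        ring

def cycleWeight {n : ℕ} (A : Matrix (ZMod n) (ZMod n) ℝ) (t : ℕ) : ℝ := A t (t + 1)

variable (a : ℕ → ℝ) (c : ℝ)

def chordWeight : ℕ → ℝ
  | 0 => c
  | k + 1 => -(a (2 * k + 1) * chordWeight k) / a (2 * k)

lemma neg_one_pow_mul_chordWeight_pos (ha : ∀ t, 0 < a t) (hc : 0 < c) (k : ℕ) :
    0 < (-1) ^ k * chordWeight a c k := by
  induction k with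
  | zero => simpa [chordWeight] using hc
  | succ k ih =>
    have hk : (-1) ^ (k + 1) * chordWeight a c (k + 1) =
        (-1) ^ k * chordWeight a c k * a (2 * k + 1) / a (2 * k) := by
      rw [chordWeight, pow_succ]; ring
    rw [hk]
    exact div_pos (mul_pos ih (ha _)) (ha _)

variable (x : ℕ → ℝ) (y : ℝ)

def pairFst (j : ℕ) : ℝ := x (2 * j) + a (2 * j + 1) / a (2 * j) * x (2 * j + 2)

def pairSnd (j : ℕ) : ℝ := x (2 * j + 1) + chordWeight a c j / a (2 * j) * y

lemma sum_path_add_chord (ha : ∀ j, a (2 * j) ≠ 0) (K : ℕ) :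
    ∑ t ∈ range (2 * K), 2 * a t * x t * x (t + 1) + 2 * c * x 0 * y =
      ∑ j ∈ range K, 2 * a (2 * j) * pairFst a x j * pairSnd a c x y j +
        2 * chordWeight a c K * x (2 * K) * y := by
  induction K with
  | zero => simp [chordWeight]
  | succ K ih =>
    rw [show 2 * (K + 1) = 2 * K + 1 + 1 by ring, sum_range_succ, sum_range_succ, add_right_comm,
      add_right_comm _ _ (2 * c * x 0 * y), ih, sum_range_succ, chordWeight, pairFst, pairSnd]
    field_simp [ha K]
    ring

variable (K : ℕ)

def hyperbolicWeights (p : Fin K → ℝ) (d : ℝ) : Option (Fin K × Bool) → ℝ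
  | none => d
  | some (j, true) => p j
  | some (j, false) => -p j

lemma card_pos_hyperbolicWeights {p : Fin K → ℝ} (hp : ∀ j, 0 < p j) (d : ℝ) :
    Fintype.card {i // 0 < hyperbolicWeights K p d i} = K + if 0 < d then 1 else 0 := by
  rw [Fintype.card_subtype, card_filter, Fintype.sum_option, Fintype.sum_prod_type, add_comm]
  simp [hyperbolicWeights, hp, fun j => not_lt.2 (hp j).le]
  -- the two sides differ only in their `Decidable (0 < d)` instances
  congr

lemma card_neg_hyperbolicWeights {p : Fin K → ℝ} (hp : ∀ j, 0 < p j) (d : ℝ) :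
    Fintype.card {i // hyperbolicWeights K p d i < 0} = K + if d < 0 then 1 else 0 := by
  rw [Fintype.card_subtype, card_filter, Fintype.sum_option, Fintype.sum_prod_type, add_comm]
  simp [hyperbolicWeights, hp, fun j => not_lt.2 (hp j).le]
  congr

def hyperbolicCoords : Option (Fin K × Bool) → ℝ
  | none => x (2 * K)
  | some (j, true) => pairFst a x j + pairSnd a (a (2 * K)) x (x (2 * K)) j
  | some (j, false) => pairFst a x j - pairSnd a (a (2 * K)) x (x (2 * K)) j

lemma sum_cycle_eq_sum_hyperbolicWeights (ha : ∀ j, a (2 * j) ≠ 0)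
    (hx : x (2 * K + 1) = x 0) :
    ∑ t ∈ range (2 * K + 1), 2 * a t * x t * x (t + 1) =
      ∑ i, hyperbolicWeights K (fun j => a (2 * j) / 2) (2 * chordWeight a (a (2 * K)) K) i *
        hyperbolicCoords a x K i ^ 2 := by
  calc ∑ t ∈ range (2 * K + 1), 2 * a t * x t * x (t + 1)
      = ∑ t ∈ range (2 * K), 2 * a t * x t * x (t + 1) + 2 * a (2 * K) * x 0 * x (2 * K) := by
        rw [sum_range_succ, hx]; ring
    _ = ∑ j ∈ range K, 2 * a (2 * j) * pairFst a x j * pairSnd a (a (2 * K)) x (x (2 * K)) j +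
          2 * chordWeight a (a (2 * K)) K * x (2 * K) ^ 2 := by
        rw [sum_path_add_chord a _ x _ ha K]; ring
    _ = _ := by
        rw [← Fin.sum_univ_eq_sum_range, add_comm]
        simp only [Fintype.sum_option, Fintype.sum_prod_type, Fintype.sum_bool, hyperbolicWeights,
          hyperbolicCoords]
        congr 1
        exact sum_congr rfl fun j _ => by ring

variable {x} in
lemma eq_zero_of_hyperbolicCoords_eq_zero (hx : hyperbolicCoords a x K = 0) {t : ℕ}
    (ht : t ≤ 2 * K) : x t = 0 := by
  have hlast : x (2 * K) = 0 := congrFun hx none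
  have hpair (j : ℕ) (hj : j < K) :
      pairFst a x j = 0 ∧ pairSnd a (a (2 * K)) x (x (2 * K)) j = 0 := by
    have hsum : pairFst a x j + pairSnd a (a (2 * K)) x (x (2 * K)) j = 0 :=
      congrFun hx (some (⟨j, hj⟩, true))
    have hdiff : pairFst a x j - pairSnd a (a (2 * K)) x (x (2 * K)) j = 0 :=
      congrFun hx (some (⟨j, hj⟩, false))
    constructor <;> linarith
  have hodd (j : ℕ) (hj : j < K) : x (2 * j + 1) = 0 := by
    simpa [pairSnd, hlast] using (hpair j hj).2
  have heven (j : ℕ) (hj : j ≤ K) : x (2 * j) = 0 := by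
    induction hj using Nat.decreasingInduction with
    | self => exact hlast
    | of_succ j hj ih =>
      simpa [pairFst, show 2 * j + 2 = 2 * (j + 1) by ring, ih] using (hpair j hj).1
  obtain ⟨j, rfl | rfl⟩ := Nat.even_or_odd' t
  · exact heven j (by omega)
  · exact hodd j (by omega)

theorem exists_linearEquiv_dotProduct_mulVec_eq (hK : 1 ≤ K)
    {A : Matrix (ZMod (2 * K + 1)) (ZMod (2 * K + 1)) ℝ} (hA : A.IsSymm)
    (hzero : ∀ i j, ¬(j = i + 1 ∨ j = i - 1) → A i j = 0)
    (ha : ∀ j, cycleWeight A (2 * j) ≠ 0) :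
    ∃ L : (ZMod (2 * K + 1) → ℝ) ≃ₗ[ℝ] (Option (Fin K × Bool) → ℝ), ∀ x, x ⬝ᵥ A *ᵥ x =
      ∑ i, hyperbolicWeights K (fun j => cycleWeight A (2 * j) / 2)
        (2 * chordWeight (cycleWeight A) (cycleWeight A (2 * K)) K) i * L x i ^ 2 := by
  let f : (ZMod (2 * K + 1) → ℝ) →ₗ[ℝ] (Option (Fin K × Bool) → ℝ) :=
    { toFun x := hyperbolicCoords (cycleWeight A) (x ∘ (↑)) K
      map_add' x y := by
        ext (_ | ⟨j, _ | _⟩) <;> simp [hyperbolicCoords, pairFst, pairSnd] <;> ring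
      map_smul' r x := by
        ext (_ | ⟨j, _ | _⟩) <;> simp [hyperbolicCoords, pairFst, pairSnd] <;> ring }
  have hf : Function.Injective f := by
    refine (injective_iff_map_eq_zero f).2 fun x hx => funext fun z => ?_
    simpa using eq_zero_of_hyperbolicCoords_eq_zero _ K hx (t := z.val) (by grind)
  have hdim : Module.finrank ℝ (ZMod (2 * K + 1) → ℝ) =
      Module.finrank ℝ (Option (Fin K × Bool) → ℝ) := by
    simp [mul_comm]
  refine ⟨LinearMap.linearEquivOfInjective f hf hdim, fun x => ?_⟩
  have hwrap : (x ∘ (↑)) (2 * K + 1) = (x ∘ (↑)) 0 := by simp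
  rw [dotProduct_mulVec_eq_sum_cycle (by omega) hA hzero, ZMod.sum_univ_eq_sum_range]
  refine .trans ?_ (sum_cycle_eq_sum_hyperbolicWeights _ _ K ha hwrap)
  simp [cycleWeight]

end CyclePattern

end

open CyclePattern

/-- For odd `n ≥ 3`, every real symmetric `n × n` matrix whose support is exactly the
adjacency pattern of the `n`-cycle has signature `((n+1)/2, (n-1)/2)` if `n ≡ 1 (mod 4)`
and `((n-1)/2, (n+1)/2)` if `n ≡ 3 (mod 4)`. -/
theorem cycle_pattern_signature (n : ℕ) [NeZero n] (hn : 3 ≤ n) (hodd : Odd n)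
    (A : Matrix (ZMod n) (ZMod n) ℝ) (hA : A.IsHermitian)
    (hpos : ∀ i j : ZMod n, (j = i + 1 ∨ j = i - 1) → 0 < A i j)
    (hzero : ∀ i j : ZMod n, ¬(j = i + 1 ∨ j = i - 1) → A i j = 0) :
    (n % 4 = 1 →
      Fintype.card {i : ZMod n // 0 < hA.eigenvalues i} = (n + 1) / 2 ∧
      Fintype.card {i : ZMod n // hA.eigenvalues i < 0} = (n - 1) / 2) ∧
    (n % 4 = 3 →
      Fintype.card {i : ZMod n // 0 < hA.eigenvalues i} = (n - 1) / 2 ∧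
      Fintype.card {i : ZMod n // hA.eigenvalues i < 0} = (n + 1) / 2) := by
  obtain ⟨K, rfl⟩ := hodd
  have ha : ∀ t, 0 < cycleWeight A t := fun t => hpos _ _ (Or.inl rfl)
  obtain ⟨L, hL⟩ := exists_linearEquiv_dotProduct_mulVec_eq K (by omega)
    (isHermitian_iff_isSymm.1 hA) hzero fun j => (ha _).ne'
  obtain ⟨hp, hq⟩ := hA.card_eigenvalues_pos_neg_eq_of_linearEquiv _ L hL
  have hsign := neg_one_pow_mul_chordWeight_pos _ _ ha (ha (2 * K)) K
  rw [hp, hq, card_pos_hyperbolicWeights K fun j => half_pos (ha _),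
    card_neg_hyperbolicWeights K fun j => half_pos (ha _)]
  refine ⟨fun h4 => ?_, fun h4 => ?_⟩
  · rw [(Nat.even_iff.2 (by omega) : Even K).neg_one_pow, one_mul] at hsign
    rw [if_pos (by linarith), if_neg (by linarith)]
    omega
  · rw [(Nat.odd_iff.2 (by omega) : Odd K).neg_one_pow, neg_one_mul, neg_pos] at hsign
    rw [if_neg (by linarith), if_pos (by linarith)]
    omega
end

section
/- Every 5×5 real symmetric matrix A whose support is exactly the adjacency pattern of the 5-cycle (a_{ij} > 0 iff i - j ≡ ±1 mod 5, a_{ij} = 0 otherwise) has exactly 3 positive eigenvalues and 2 negative eigenvalues. -/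
/-!
The pattern has zero diagonal and the 5-cycle has no triangles, so `tr A = tr A³ = 0`: the
eigenvalues have vanishing sum and vanishing sum of cubes. The only permutations supported on the
pattern are the two rotations, both even, so `det A = ∏ aᵢ,ᵢ₊₁ + ∏ aᵢ₊₁,ᵢ > 0` and the number of
negative eigenvalues is even. It is not `0`, since the eigenvalues sum to zero, and not `4`: a
single positive eigenvalue would equal the sum of the absolute values of the four negative ones,
so its cube would exceed the sum of their cubes.
-/

open Matrix Finset

section Signature

variable {R ι : Type*} [CommRing R] [LinearOrder R] [IsStrictOrderedRing R]

theorem Finset.prod_eq_neg_one_pow_card_mul_prod_abs (s : Finset ι) (f : ι → R) :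
    ∏ i ∈ s, f i = (-1) ^ #{i ∈ s | f i < 0} * ∏ i ∈ s, |f i| := by
  calc ∏ i ∈ s, f i = ∏ i ∈ s, (if f i < 0 then -1 else 1) * |f i| := by
        refine prod_congr rfl fun i _ => ?_
        split_ifs with h
        · rw [abs_of_neg h, neg_one_mul, neg_neg]
        · rw [abs_of_nonneg (not_lt.1 h), one_mul]
    _ = _ := by rw [prod_mul_distrib, prod_ite, prod_const, prod_const_one, mul_one]

theorem Finset.sum_pow_three_lt_pow_three_sum {s : Finset ι} {f : ι → R}
    (hf : ∀ i ∈ s, 0 < f i) (hs : 1 < #s) : ∑ i ∈ s, f i ^ 3 < (∑ i ∈ s, f i) ^ 3 := by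
  set S := ∑ i ∈ s, f i
  have hlt : ∀ i ∈ s, f i < S := fun i hi => by
    obtain ⟨j, hj, hji⟩ := s.exists_mem_ne hs i
    exact single_lt_sum hji hi hj (hf j hj) fun k hk _ => (hf k hk).le
  calc ∑ i ∈ s, f i ^ 3 = ∑ i ∈ s, f i * f i ^ 2 := sum_congr rfl fun i _ => by ring
    _ < ∑ i ∈ s, f i * S ^ 2 := sum_lt_sum_of_nonempty (card_pos.1 (by omega)) fun i hi =>
        mul_lt_mul_of_pos_left (pow_lt_pow_left₀ (hlt i hi) (hf i hi).le two_ne_zero) (hf i hi)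
    _ = S ^ 3 := by rw [← sum_mul]; ring

theorem Finset.sum_pow_three_pos_of_sum_eq_zero [DecidableEq ι] {s : Finset ι} {f : ι → R}
    {i₀ : ι} (hi₀ : i₀ ∈ s) (hs : 2 < #s) (hneg : ∀ i ∈ s, i ≠ i₀ → f i < 0)
    (hsum : ∑ i ∈ s, f i = 0) : 0 < ∑ i ∈ s, f i ^ 3 := by
  have hcard : 1 < #(s.erase i₀) := by rw [card_erase_of_mem hi₀]; omega
  have hcubes := sum_pow_three_lt_pow_three_sum (f := fun i => -f i)
    (fun i hi => neg_pos.2 (hneg i (mem_of_mem_erase hi) (ne_of_mem_erase hi))) hcard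
  have hbalance : ∑ i ∈ s.erase i₀, -f i = f i₀ := by
    rw [sum_neg_distrib, neg_eq_iff_add_eq_zero, add_comm, add_sum_erase s f hi₀, hsum]
  rw [hbalance] at hcubes
  simp only [Odd.neg_pow (by decide : Odd 3), sum_neg_distrib] at hcubes
  rw [← add_sum_erase s _ hi₀]
  linarith

theorem card_pos_eq_three_and_card_neg_eq_two [Fintype ι] (hι : Fintype.card ι = 5)
    (μ : ι → R) (h1 : ∑ i, μ i = 0) (h3 : ∑ i, μ i ^ 3 = 0) (hprod : 0 < ∏ i, μ i) :
    Fintype.card {i // 0 < μ i} = 3 ∧ Fintype.card {i // μ i < 0} = 2 := by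
  classical
  have hne : ∀ i, μ i ≠ 0 := fun i => prod_ne_zero_iff.1 hprod.ne' i (mem_univ i)
  have hnot_pos : ∀ i, ¬0 < μ i ↔ μ i < 0 := fun i => by
    rw [not_lt, le_iff_lt_or_eq, or_iff_left (hne i)]
  simp only [Fintype.card_subtype]
  have hcard : #{i | 0 < μ i} + #{i | μ i < 0} = 5 := by
    rw [← hι, ← card_univ, ← card_filter_add_card_filter_not (s := univ) fun i => 0 < μ i]
    simp only [hnot_pos]
  have heven : Even #{i | μ i < 0} := by
    by_contra hodd
    have habs : 0 ≤ ∏ i, |μ i| := prod_nonneg fun i _ => abs_nonneg (μ i)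
    rw [prod_eq_neg_one_pow_card_mul_prod_abs, (Nat.not_even_iff_odd.1 hodd).neg_one_pow] at hprod
    linarith
  obtain ⟨i₁⟩ : Nonempty ι := Fintype.card_pos_iff.1 (by omega)
  have hpos : 0 < #{i | 0 < μ i} := by
    obtain ⟨i, -, hi⟩ := exists_pos_of_sum_zero_of_exists_nonzero μ h1 ⟨i₁, mem_univ _, hne i₁⟩
    exact card_pos.2 ⟨i, mem_filter.2 ⟨mem_univ i, hi⟩⟩
  have hneg : 0 < #{i | μ i < 0} := by
    obtain ⟨i, -, hi⟩ := exists_pos_of_sum_zero_of_exists_nonzero (fun i => -μ i)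
      (by rw [sum_neg_distrib, h1, neg_zero]) ⟨i₁, mem_univ _, neg_ne_zero.2 (hne i₁)⟩
    exact card_pos.2 ⟨i, mem_filter.2 ⟨mem_univ i, neg_pos.1 hi⟩⟩
  have hneg_ne_four : #{i | μ i < 0} ≠ 4 := by
    intro h4
    obtain ⟨i₀, hi₀⟩ := card_eq_one.1 (show #{i | 0 < μ i} = 1 by omega)
    have hothers : ∀ i ∈ univ, i ≠ i₀ → μ i < 0 := fun i _ hi =>
      (hnot_pos i).1 fun h => hi (mem_singleton.1 (hi₀ ▸ mem_filter.2 ⟨mem_univ i, h⟩))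
    have := sum_pow_three_pos_of_sum_eq_zero (mem_univ i₀) (by rw [card_univ, hι]; norm_num)
      hothers h1
    linarith
  obtain ⟨k, hk⟩ := heven
  omega

end Signature

section CyclePattern

variable {R : Type*}

theorem Matrix.IsHermitian.trace_pow_eq_sum_eigenvalues_pow {𝕜 n : Type*} [RCLike 𝕜] [Fintype n]
    [DecidableEq n] {A : Matrix n n 𝕜} (hA : A.IsHermitian) (k : ℕ) :
    (A ^ k).trace = ∑ i, (hA.eigenvalues i : 𝕜) ^ k := by
  conv_lhs => rw [hA.spectral_theorem, ← map_pow, Unitary.conjStarAlgAut_apply, trace_mul_cycle,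
    Unitary.coe_star_mul_self, one_mul, diagonal_pow, trace_diagonal]
  rfl

theorem Matrix.trace_pow_three_eq_zero_of_no_triangles {n : Type*} [Semiring R] [Fintype n]
    [DecidableEq n] {A : Matrix n n R} (h : ∀ i j k, A i j * A j k * A k i = 0) :
    (A ^ 3).trace = 0 := by
  refine sum_eq_zero fun i _ => ?_
  simp only [pow_three, diag_apply, mul_apply, sum_mul, ← mul_assoc, h, sum_const_zero]

theorem Matrix.det_fin_five_cycle [CommRing R] (a b c d e a' b' c' d' e' : R) :
    det !![0, a, 0, 0, e'; a', 0, b, 0, 0; 0, b', 0, c, 0; 0, 0, c', 0, d; e, 0, 0, d', 0] =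
      a * b * c * d * e + a' * b' * c' * d' * e' := by
  simp [det_succ_row_zero, Fin.sum_univ_succ, Fin.succAbove]
  ring

theorem Matrix.det_fin_five_of_cycle_pattern [CommRing R] (A : Matrix (Fin 5) (Fin 5) R)
    (h : ∀ i j : Fin 5, ¬(j = i + 1 ∨ j = i - 1) → A i j = 0) :
    A.det = ∏ i, A i (i + 1) + ∏ i, A (i + 1) i := by
  have hA : A = !![0, A 0 1, 0, 0, A 0 4; A 1 0, 0, A 1 2, 0, 0; 0, A 2 1, 0, A 2 3, 0;
      0, 0, A 3 2, 0, A 3 4; A 4 0, 0, 0, A 4 3, 0] := by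
    ext i j
    fin_cases i <;> fin_cases j <;> first | rfl | exact h _ _ (by decide)
  conv_lhs => rw [hA]
  rw [det_fin_five_cycle, Fin.prod_univ_five, Fin.prod_univ_five]
  simp only [Fin.isValue, Fin.reduceAdd]

theorem Matrix.trace_pow_three_eq_zero_of_cycle_pattern [Semiring R]
    (A : Matrix (ZMod 5) (ZMod 5) R) (h : ∀ i j : ZMod 5, ¬(j = i + 1 ∨ j = i - 1) → A i j = 0) :
    (A ^ 3).trace = 0 := by
  refine trace_pow_three_eq_zero_of_no_triangles fun i j k => ?_
  have htriangle_free : ¬(j = i + 1 ∨ j = i - 1) ∨ ¬(k = j + 1 ∨ k = j - 1) ∨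
      ¬(i = k + 1 ∨ i = k - 1) := by
    revert i j k; decide
  rcases htriangle_free with hij | hjk | hki
  · rw [h i j hij, zero_mul, zero_mul]
  · rw [h j k hjk, mul_zero, zero_mul]
  · rw [h k i hki, mul_zero]

end CyclePattern

/-- Every `5 × 5` real symmetric matrix whose support is exactly the adjacency pattern of
the 5-cycle (positive entries exactly on cycle edges, zero elsewhere) has exactly 3
positive eigenvalues and 2 negative eigenvalues. -/
theorem five_cycle_pattern_signature (A : Matrix (ZMod 5) (ZMod 5) ℝ) (hA : A.IsHermitian)
    (hpos : ∀ i j : ZMod 5, (j = i + 1 ∨ j = i - 1) → 0 < A i j)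
    (hzero : ∀ i j : ZMod 5, ¬(j = i + 1 ∨ j = i - 1) → A i j = 0) :
    Fintype.card {i : ZMod 5 // 0 < hA.eigenvalues i} = 3 ∧
    Fintype.card {i : ZMod 5 // hA.eigenvalues i < 0} = 2 := by
  have htrace : A.trace = 0 := sum_eq_zero fun i _ => hzero i i (by revert i; decide)
  have htrace_cube : (A ^ 3).trace = 0 := trace_pow_three_eq_zero_of_cycle_pattern A hzero
  -- `ZMod 5` is definitionally `Fin 5`, with the same arithmetic.
  have hdet : 0 < A.det :=
    lt_of_lt_of_eq (add_pos (prod_pos fun i _ => hpos _ _ (Or.inl rfl))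
      (prod_pos fun i _ => hpos _ _ (Or.inr (add_sub_cancel_right i 1).symm)))
      (det_fin_five_of_cycle_pattern A hzero).symm
  refine card_pos_eq_three_and_card_neg_eq_two (ZMod.card 5) hA.eigenvalues ?_ ?_ ?_
  · simpa [hA.trace_eq_sum_eigenvalues] using htrace
  · simpa [hA.trace_pow_eq_sum_eigenvalues_pow] using htrace_cube
  · simpa [hA.det_eq_prod_eigenvalues] using hdet
end

section
/- Let H_7 be the graph on vertices {1,…,7} with edges {12, 13, 14, 23, 25, 36, 47, 57, 67}. Let A be a 7×7 real symmetric matrix with a_{ij} > 0 for ij ∈ E(H_7) and a_{ij} = 0 otherwise. Then det A = -2·a_{14}·a_{25}·a_{36}·(a_{12}·a_{36}·a_{47}·a_{57} + a_{13}·a_{25}·a_{47}·a_{67} + a_{14}·a_{23}·a_{57}·a_{67}) < 0; in particular A is nonsingular. -/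
/-!
Since the diagonal is zero, a permutation contributes to `det A` only if it is a cover of `H₇`
by edges (as transpositions) and cycles of the graph. The only triangle is `123`, and the star
on `{4,5,6,7}` has neither a perfect matching nor a cycle, so every cover is a pentagon through `7`
(`1-4-7-5-2`, `1-4-7-6-3` or `2-5-7-6-3`, in either orientation) together with the remaining
pendant edge. Each cover has sign `-1`, giving the three terms of the formula, all of one sign.
-/

/-- The edge relation of the graph `H₇` on vertices `{1,…,7}` (represented by `Fin 7`
with vertex `k` corresponding to index `k - 1`), with edges
`{12, 13, 14, 23, 25, 36, 47, 57, 67}`. -/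
def H7Edge (i j : Fin 7) : Prop :=
  (i.val + 1, j.val + 1) ∈ [(1,2),(1,3),(1,4),(2,3),(2,5),(3,6),(4,7),(5,7),(6,7)] ∨
  (j.val + 1, i.val + 1) ∈ [(1,2),(1,3),(1,4),(2,3),(2,5),(3,6),(4,7),(5,7),(6,7)]

instance : DecidableRel H7Edge := fun i j => by
  unfold H7Edge
  infer_instance

open Matrix

section

variable {R : Type*}

def h7Matrix [Zero R] (a₁₂ a₁₃ a₁₄ a₂₃ a₂₅ a₃₆ a₄₇ a₅₇ a₆₇ : R) : Matrix (Fin 7) (Fin 7) R :=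
  !![0, a₁₂, a₁₃, a₁₄, 0, 0, 0;
    a₁₂, 0, a₂₃, 0, a₂₅, 0, 0;
    a₁₃, a₂₃, 0, 0, 0, a₃₆, 0;
    a₁₄, 0, 0, 0, 0, 0, a₄₇;
    0, a₂₅, 0, 0, 0, 0, a₅₇;
    0, 0, a₃₆, 0, 0, 0, a₆₇;
    0, 0, 0, a₄₇, a₅₇, a₆₇, 0]

theorem eq_h7Matrix_of_isSymm [Zero R] {A : Matrix (Fin 7) (Fin 7) R} (hsymm : A.IsSymm)
    (hzero : ∀ i j, ¬ H7Edge i j → A i j = 0) :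
    A = h7Matrix (A 0 1) (A 0 2) (A 0 3) (A 1 2) (A 1 4) (A 2 5) (A 3 6) (A 4 6) (A 5 6) := by
  ext i j
  fin_cases i <;> fin_cases j <;>
    first
      | rfl
      | exact hzero _ _ (by decide)
      | exact hsymm.apply _ _

theorem det_h7Matrix [CommRing R] (a₁₂ a₁₃ a₁₄ a₂₃ a₂₅ a₃₆ a₄₇ a₅₇ a₆₇ : R) :
    (h7Matrix a₁₂ a₁₃ a₁₄ a₂₃ a₂₅ a₃₆ a₄₇ a₅₇ a₆₇).det = -2 * a₁₄ * a₂₅ * a₃₆ *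
      (a₁₂ * a₃₆ * a₄₇ * a₅₇ + a₁₃ * a₂₅ * a₄₇ * a₆₇ + a₁₄ * a₂₃ * a₅₇ * a₆₇) := by
  -- Indices are kept in `Fin.succ` form so that `succAbove` and the entries reduce structurally.
  simp only [h7Matrix, det_succ_row_zero, det_fin_zero, Fin.sum_univ_succ, Fin.sum_univ_zero,
    submatrix_apply, of_apply, cons_val_zero, cons_val_succ, Fin.zero_succAbove,
    Fin.succ_succAbove_zero, Fin.succ_succAbove_succ, Fin.val_zero, Fin.val_succ,
    zero_mul, mul_zero, add_zero, zero_add]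
  ring

theorem det_h7Matrix_neg [CommRing R] [LinearOrder R] [IsStrictOrderedRing R]
    {a₁₂ a₁₃ a₁₄ a₂₃ a₂₅ a₃₆ a₄₇ a₅₇ a₆₇ : R} (h₁₂ : 0 < a₁₂) (h₁₃ : 0 < a₁₃) (h₁₄ : 0 < a₁₄)
    (h₂₃ : 0 < a₂₃) (h₂₅ : 0 < a₂₅) (h₃₆ : 0 < a₃₆) (h₄₇ : 0 < a₄₇) (h₅₇ : 0 < a₅₇)
    (h₆₇ : 0 < a₆₇) :
    (h7Matrix a₁₂ a₁₃ a₁₄ a₂₃ a₂₅ a₃₆ a₄₇ a₅₇ a₆₇).det < 0 := by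
  have hpos : 0 < a₁₄ * a₂₅ * a₃₆ *
      (a₁₂ * a₃₆ * a₄₇ * a₅₇ + a₁₃ * a₂₅ * a₄₇ * a₆₇ + a₁₄ * a₂₃ * a₅₇ * a₆₇) := by
    positivity
  rw [det_h7Matrix]
  linarith

end

/-- For a `7 × 7` real symmetric matrix whose support is exactly the edge set of `H₇`
(positive entries on edges, zero elsewhere),
`det A = -2·a₁₄·a₂₅·a₃₆·(a₁₂·a₃₆·a₄₇·a₅₇ + a₁₃·a₂₅·a₄₇·a₆₇ + a₁₄·a₂₃·a₅₇·a₆₇) < 0`;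
in particular `A` is nonsingular. -/
theorem H7_pattern_det (A : Matrix (Fin 7) (Fin 7) ℝ) (hsymm : A.IsSymm)
    (hpos : ∀ i j : Fin 7, H7Edge i j → 0 < A i j)
    (hzero : ∀ i j : Fin 7, ¬ H7Edge i j → A i j = 0) :
    A.det = -2 * A 0 3 * A 1 4 * A 2 5 *
      (A 0 1 * A 2 5 * A 3 6 * A 4 6 + A 0 2 * A 1 4 * A 3 6 * A 5 6 +
        A 0 3 * A 1 2 * A 4 6 * A 5 6) ∧
    A.det < 0 ∧ A.det ≠ 0 := by
  have hA := congrArg det (eq_h7Matrix_of_isSymm hsymm hzero)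
  have hneg : A.det < 0 := hA ▸ det_h7Matrix_neg (hpos 0 1 (by decide)) (hpos 0 2 (by decide))
    (hpos 0 3 (by decide)) (hpos 1 2 (by decide)) (hpos 1 4 (by decide)) (hpos 2 5 (by decide))
    (hpos 3 6 (by decide)) (hpos 4 6 (by decide)) (hpos 5 6 (by decide))
  exact ⟨hA.trans (det_h7Matrix ..), hneg, hneg.ne⟩
end

section
/- In every 2-coloring of the edges of the complete graph K_9 with colors red and blue, there is either a red triangle (K_3) or a blue K_4. -/
/-!
If `G` has no triangle and no independent set of size 4, the neighbourhood of every vertex is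
independent, so every degree is at most 3; the non-neighbourhood of a vertex contains no triangle
and (adding the vertex) no independent triple, so by `R(3,3) ≤ 6` it has at most 5 vertices.
On 9 vertices this forces a 3-regular graph on an odd number of vertices, contradicting the
handshake lemma; on 10 or more vertices the two bounds are already incompatible.
-/

open Finset

namespace SimpleGraph

variable {V : Type*} {G : SimpleGraph V}

theorem IndepSetFree.card_lt_of_isIndepSet {n : ℕ} (hn : G.IndepSetFree n) {s : Finset V}
    (hs : G.IsIndepSet s) : #s < n := by
  by_contra! hle
  obtain ⟨t, hts, rfl⟩ := exists_subset_card_eq hle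
  exact hn t ⟨hs.mono (coe_subset.mpr hts), rfl⟩

variable [Fintype V] [DecidableRel G.Adj]

theorem degree_lt_of_cliqueFree_three {n : ℕ} (h3 : G.CliqueFree 3) (hn : G.IndepSetFree n)
    (v : V) : G.degree v < n := by
  rw [← card_neighborFinset_eq_degree]
  exact hn.card_lt_of_isIndepSet
    (by simpa using G.isIndepSet_neighborSet_of_triangleFree h3 v)

variable [DecidableEq V]

variable (G) in
theorem exists_isNClique_three_or_isNIndepSet_three_of_three_le_card_inter_neighborFinset
    {s : Finset V} {u : V} (hu : u ∈ s) (h : 3 ≤ #(s ∩ G.neighborFinset u)) :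
    ∃ r ⊆ s, G.IsNClique 3 r ∨ G.IsNIndepSet 3 r := by
  obtain ⟨t, hts, ht⟩ := exists_subset_card_eq h
  have hts' : t ⊆ s := hts.trans inter_subset_left
  by_cases hind : G.IsIndepSet t
  · exact ⟨t, hts', Or.inr ⟨hind, ht⟩⟩
  obtain ⟨a, ha, b, hb, hab, hadj⟩ : ∃ a ∈ t, ∃ b ∈ t, a ≠ b ∧ G.Adj a b := by
    simpa [IsIndepSet, Set.Pairwise] using hind
  have hua : G.Adj u a := (mem_neighborFinset _ _ _).mp (mem_inter.mp (hts ha)).2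
  have hub : G.Adj u b := (mem_neighborFinset _ _ _).mp (mem_inter.mp (hts hb)).2
  refine ⟨{u, a, b}, ?_, Or.inl (is3Clique_triple_iff.mpr ⟨hua, hub, hadj⟩)⟩
  exact insert_subset hu (insert_subset (hts' ha) (singleton_subset_iff.mpr (hts' hb)))

variable (G) in
theorem exists_isNClique_three_or_isNIndepSet_three_of_six_le_card {s : Finset V}
    (hs : 6 ≤ #s) : ∃ r ⊆ s, G.IsNClique 3 r ∨ G.IsNIndepSet 3 r := by
  obtain ⟨u, hu⟩ := card_pos.mp (by omega : 0 < #s)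
  have hcover : s.erase u ⊆ (s ∩ G.neighborFinset u) ∪ (s ∩ Gᶜ.neighborFinset u) := by
    intro x hx
    obtain ⟨hxu, hxs⟩ := mem_erase.mp hx
    by_cases hadj : G.Adj u x
    · simp [hxs, hadj]
    · simp [hxs, hadj, compl_adj, Ne.symm hxu]
  have hlt : 2 * 2 < #((s ∩ G.neighborFinset u) ∪ (s ∩ Gᶜ.neighborFinset u)) := by
    have := card_le_card hcover
    rw [card_erase_of_mem hu] at this
    omega
  obtain ⟨C, hC, hCG | hCGc⟩ := exists_subset_or_subset_of_two_mul_lt_card hlt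
  · exact G.exists_isNClique_three_or_isNIndepSet_three_of_three_le_card_inter_neighborFinset hu
      (hC.trans_le (card_le_card hCG))
  · obtain ⟨r, hrs, hr⟩ :=
      Gᶜ.exists_isNClique_three_or_isNIndepSet_three_of_three_le_card_inter_neighborFinset hu
        (hC.trans_le (card_le_card hCGc))
    rw [isNClique_compl, isNIndepSet_compl, or_comm] at hr
    exact ⟨r, hrs, hr⟩

theorem compl_degree_lt_six (h3 : G.CliqueFree 3) (h4 : G.IndepSetFree 4) (v : V) :
    Gᶜ.degree v < 6 := by
  by_contra! h
  rw [← card_neighborFinset_eq_degree] at h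
  obtain ⟨r, hr, hclique | hindep⟩ := G.exists_isNClique_three_or_isNIndepSet_three_of_six_le_card h
  · exact h3 r hclique
  · have : Gᶜ.IsNClique 4 (insert v r) :=
      ((G.isNClique_compl).mpr hindep).insert fun b hb => (mem_neighborFinset _ _ _).mp (hr hb)
    exact h4 _ ((G.isNClique_compl).mp this)

theorem card_le_eight_of_cliqueFree_three_of_indepSetFree_four (h3 : G.CliqueFree 3)
    (h4 : G.IndepSetFree 4) : Fintype.card V ≤ 8 := by
  have hdeg (v : V) : G.degree v < 4 ∧ Fintype.card V - 1 - G.degree v < 6 :=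
    ⟨degree_lt_of_cliqueFree_three h3 h4 v, degree_compl G v ▸ compl_degree_lt_six h3 h4 v⟩
  by_contra! hcard
  obtain ⟨v⟩ : Nonempty V := Fintype.card_pos_iff.mp (by omega)
  have hnine : Fintype.card V = 9 := by have := hdeg v; omega
  have hodd : #{v | Odd (G.degree v)} = 9 := by
    rw [filter_true_of_mem fun w _ => by rw [show G.degree w = 3 by have := hdeg w; omega]; decide]
    exact hnine
  exact absurd (hodd ▸ G.even_card_odd_degree_vertices) (by decide)

end SimpleGraph

/-- Ramsey: in every red/blue coloring of the edges of `K₉` (the red graph being `G`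
and the blue graph its complement), there is a red triangle or a blue `K₄`. -/
theorem ramsey_three_four (G : SimpleGraph (Fin 9)) :
    (∃ s : Finset (Fin 9), s.card = 3 ∧ ∀ a ∈ s, ∀ b ∈ s, a ≠ b → G.Adj a b) ∨
    (∃ s : Finset (Fin 9), s.card = 4 ∧ ∀ a ∈ s, ∀ b ∈ s, a ≠ b → ¬ G.Adj a b) := by
  classical
  have h : ¬ G.CliqueFree 3 ∨ ¬ G.IndepSetFree 4 := by
    by_contra! h
    simpa using G.card_le_eight_of_cliqueFree_three_of_indepSetFree_four h.1 h.2
  refine h.imp (fun h3 => ?_) (fun h4 => ?_)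
  · obtain ⟨s, hs⟩ : ∃ s, G.IsNClique 3 s := by simpa [SimpleGraph.CliqueFree] using h3
    exact ⟨s, hs.card_eq, fun a ha b hb => hs.isClique ha hb⟩
  · obtain ⟨s, hs⟩ : ∃ s, G.IsNIndepSet 4 s := by simpa [SimpleGraph.IndepSetFree] using h4
    exact ⟨s, hs.card_eq, fun a ha b hb => hs.isIndepSet ha hb⟩
end

section
/- For every n ≥ 3 there exists a collection of 2n - 2 pairwise non-intersecting lines in ℝ^n such that the distance between any two distinct lines in the collection is exactly 1. -/
/-!
Write `ℝⁿ` as an orthogonal sum of an affine `(n-2)`-space, holding the vertices `c i` of a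
regular unit simplex, and a plane, identified with `ℂ`. Over each vertex `c i` place the two
parallel lines of the plane in direction `u i` at distance `0` and `1` from the origin, with the
`u i` pairwise non-parallel. Two lines over the same vertex are at distance `1`. Two lines over
distinct vertices are at distance at least `dist (c i) (c j) = 1` by Pythagoras, with equality
because their shadows in the plane are non-parallel and hence meet.
-/

open Complex ComplexConjugate Real
open scoped InnerProductSpace

theorem Complex.exists_ofReal_mul_add_ofReal_mul_eq {u v : ℂ} (h : (conj u * v).im ≠ 0)
    (w : ℂ) : ∃ t s : ℝ, t * u + s * v = w := by
  simp only [mul_im, conj_re, conj_im] at h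
  refine ⟨(w.re * v.im - w.im * v.re) / (u.re * v.im - u.im * v.re),
    (u.re * w.im - u.im * w.re) / (u.re * v.im - u.im * v.re), ?_⟩
  have hD : u.re * v.im - u.im * v.re ≠ 0 := fun h0 => h (by linarith)
  apply Complex.ext <;>
  · simp only [add_re, add_im, re_ofReal_mul, im_ofReal_mul]
    rw [div_mul_eq_mul_div, div_mul_eq_mul_div, ← add_div, div_eq_iff hD]
    ring

theorem exists_unit_complex_pairwise_im_conj_mul_ne_zero (N : ℕ) :
    ∃ u : Fin N → ℂ, (∀ k, ‖u k‖ = 1) ∧ ∀ k l, k ≠ l → (conj (u k) * u l).im ≠ 0 := by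
  refine ⟨fun k => exp (↑((k : ℝ) * π / N) * I), fun k => norm_exp_ofReal_mul_I _,
    fun k l hkl => ?_⟩
  have hN : (0 : ℝ) < N := by exact_mod_cast k.pos
  have hlk : (l : ℝ) - k ≠ 0 := sub_ne_zero.2 (by exact_mod_cast Fin.val_injective.ne hkl.symm)
  have hbound : |((l : ℝ) - k) * π / N| < π := by
    have hk : (k : ℝ) < N := by exact_mod_cast k.isLt
    have hl : (l : ℝ) < N := by exact_mod_cast l.isLt
    have : |(l : ℝ) - k| < N := abs_sub_lt_iff.2 ⟨by linarith [Nat.cast_nonneg (α := ℝ) k],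
      by linarith [Nat.cast_nonneg (α := ℝ) l]⟩
    rw [abs_div, abs_mul, abs_of_pos pi_pos, abs_of_pos hN, div_lt_iff₀ hN]
    exact (mul_lt_mul_of_pos_right this pi_pos).trans_eq (mul_comm _ _)
  rw [← exp_conj, map_mul, conj_ofReal, conj_I, ← Complex.exp_add,
    show (↑((k : ℝ) * π / N) * -I + ↑((l : ℝ) * π / N) * I : ℂ) =
      ↑(((l : ℝ) - k) * π / N) * I by push_cast; ring,
    exp_ofReal_mul_I_im, Ne, Real.sin_eq_zero_iff_of_lt_of_lt (abs_lt.1 hbound).1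
      (abs_lt.1 hbound).2]
  exact div_ne_zero (mul_ne_zero hlk pi_ne_zero) hN.ne'

theorem Fin.abs_sub_eq_one_of_ne {a b : Fin 2} (h : a ≠ b) : |((a : ℕ) : ℝ) - (b : ℕ)| = 1 := by
  fin_cases a <;> fin_cases b <;> simp_all

theorem inter_eq_empty_of_forall_le_dist {X : Type*} [PseudoMetricSpace X] {A B : Set X}
    {r : ℝ} (hr : 0 < r) (h : ∀ p ∈ A, ∀ q ∈ B, r ≤ dist p q) : A ∩ B = ∅ :=
  Set.eq_empty_of_forall_notMem fun x hx => by
    have := h x hx.1 x hx.2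
    rw [dist_self] at this
    linarith

section Plane

variable {E : Type*} [NormedAddCommGroup E] [InnerProductSpace ℝ E]

theorem orthonormal_pair {f g : E} (hf : ‖f‖ = 1) (hg : ‖g‖ = 1) (hfg : ⟪f, g⟫_ℝ = 0) :
    Orthonormal ℝ ![f, g] := by
  rw [orthonormal_iff_ite]
  intro i j
  fin_cases i <;> fin_cases j <;> simp [hfg, hf, hg, real_inner_comm]

noncomputable def complexIsometryOfOrthonormal {f g : E} (h : Orthonormal ℝ ![f, g]) :
    ℂ →ₗᵢ[ℝ] E :=
  (reLm.smulRight f + imLm.smulRight g).isometryOfOrthonormal (v := basisOneI)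
    (by rw [← toBasis_orthonormalBasisOneI, OrthonormalBasis.coe_toBasis]
        exact orthonormalBasisOneI.orthonormal)
    (by convert h using 1; ext i; fin_cases i <;> simp)

@[simp]
theorem complexIsometryOfOrthonormal_apply {f g : E} (h : Orthonormal ℝ ![f, g]) (z : ℂ) :
    complexIsometryOfOrthonormal h z = z.re • f + z.im • g :=
  rfl

end Plane

section Simplex

variable {E : Type*} [NormedAddCommGroup E] [InnerProductSpace ℝ E] {ι : Type*}

theorem Orthonormal.dist_inv_sqrt_two_smul {v : ι → E} (hv : Orthonormal ℝ v) {i j : ι}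
    (hij : i ≠ j) : dist ((√2)⁻¹ • v i) ((√2)⁻¹ • v j) = 1 := by
  have hsub : ‖v i - v j‖ = √2 := by
    rw [norm_sub_eq_sqrt_iff_real_inner_eq_zero.2 (hv.2 hij), hv.1, hv.1]
    norm_num
  rw [dist_eq_norm, ← smul_sub, norm_smul, hsub, norm_inv, Real.norm_of_nonneg (by positivity),
    inv_mul_cancel₀ (by positivity)]

/-- The simplex `(√2)⁻¹ • v i` lies in the affine hyperplane `⟪x, ∑ i, v i⟫ = (√2)⁻¹`, so its
edges are orthogonal to the normalised vector `∑ i, v i` as well as to `w`. -/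
theorem Orthonormal.exists_unit_simplex_orthogonal_plane [Fintype ι] [Nonempty ι] {v : ι → E}
    (hv : Orthonormal ℝ v) {w : E} (hw : ‖w‖ = 1) (hvw : ∀ i, ⟪v i, w⟫_ℝ = 0) :
    ∃ (c : ι → E) (ψ : ℂ →ₗᵢ[ℝ] E),
      (∀ i j, i ≠ j → dist (c i) (c j) = 1) ∧ ∀ i j z, ⟪c i - c j, ψ z⟫_ℝ = 0 := by
  classical
  set f : E := (√(Fintype.card ι))⁻¹ • ∑ i, v i
  have hvf : ∀ i, ⟪v i, f⟫_ℝ = (√(Fintype.card ι))⁻¹ := fun i => by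
    simp [f, inner_smul_right, inner_sum, orthonormal_iff_ite.1 hv]
  have hf : ‖f‖ = 1 := by
    have hcard : (0 : ℝ) < Fintype.card ι := by exact_mod_cast Fintype.card_pos
    rw [← pow_eq_one_iff_of_nonneg (norm_nonneg f) two_ne_zero, ← real_inner_self_eq_norm_sq]
    calc ⟪(√(Fintype.card ι))⁻¹ • ∑ i, v i, f⟫_ℝ
          = (√(Fintype.card ι))⁻¹ * ∑ i, ⟪v i, f⟫_ℝ := by rw [real_inner_smul_left, sum_inner]
      _ = 1 := by
          simp only [hvf, Finset.sum_const, Finset.card_univ, nsmul_eq_mul]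
          field_simp
          rw [Real.sq_sqrt hcard.le]
  have hfw : ⟪f, w⟫_ℝ = 0 := by simp [f, inner_smul_left, sum_inner, hvw]
  refine ⟨fun i => (√2)⁻¹ • v i, complexIsometryOfOrthonormal (orthonormal_pair hf hw hfw),
    fun i j => hv.dist_inv_sqrt_two_smul, fun i j z => ?_⟩
  simp [← smul_sub, inner_smul_left, inner_add_right, inner_smul_right, inner_sub_left, hvf, hvw]

end Simplex

theorem EuclideanSpace.exists_unit_simplex_orthogonal_plane {n : ℕ} (hn : 2 ≤ n) :
    ∃ (c : Fin (n - 1) → EuclideanSpace ℝ (Fin n)) (ψ : ℂ →ₗᵢ[ℝ] EuclideanSpace ℝ (Fin n)),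
      (∀ i j, i ≠ j → dist (c i) (c j) = 1) ∧ ∀ i j z, ⟪c i - c j, ψ z⟫_ℝ = 0 := by
  have : Nonempty (Fin (n - 1)) := ⟨⟨0, by omega⟩⟩
  have hon := EuclideanSpace.orthonormal_single (𝕜 := ℝ) (ι := Fin n)
  exact (hon.comp _ (Fin.castLE_injective (n.sub_le 1))).exists_unit_simplex_orthogonal_plane
    (hon.1 ⟨n - 1, by omega⟩) fun i => hon.2 (Fin.ne_of_val_ne (by simp; omega))

section Champagne

variable {E : Type*} [NormedAddCommGroup E] [InnerProductSpace ℝ E] {ι : Type*}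
  (c : ι → E) (ψ : ℂ →ₗᵢ[ℝ] E) (u : ι → ℂ)

/-- The point with parameter `t` on the line `{c i} × L`, where `L ⊆ ℂ` is the line in direction
`u i` at signed distance `a` from the origin. -/
noncomputable def champagnePoint (i : ι) (a t : ℝ) : E :=
  c i + ψ ((a * I + t) * u i)

theorem champagnePoint_eq_add_smul (i : ι) (a t : ℝ) :
    champagnePoint c ψ u i a t = champagnePoint c ψ u i a 0 + t • ψ (u i) := by
  rw [champagnePoint, champagnePoint, add_mul, map_add, ← real_smul (x := t), map_smul,
    ofReal_zero, add_zero, add_assoc]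

theorem range_champagnePoint (i : ι) (a : ℝ) :
    Set.range (champagnePoint c ψ u i a) =
      {x | ∃ t : ℝ, x = champagnePoint c ψ u i a 0 + t • ψ (u i)} := by
  ext x
  exact exists_congr fun t => by rw [champagnePoint_eq_add_smul, eq_comm]

variable {c ψ u}

theorem dist_champagnePoint_same_vertex {i : ι} (hu : ‖u i‖ = 1) (a b t s : ℝ) :
    dist (champagnePoint c ψ u i a t) (champagnePoint c ψ u i b s) =
      ‖(↑(a - b) * I + ↑(t - s) : ℂ)‖ := by
  rw [dist_eq_norm, champagnePoint, champagnePoint, add_sub_add_left_eq_sub, ← map_sub,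
    LinearIsometry.norm_map, ← sub_mul, norm_mul, hu, mul_one]
  push_cast
  ring_nf

theorem abs_sub_le_dist_champagnePoint {i : ι} (hu : ‖u i‖ = 1) (a b t s : ℝ) :
    |a - b| ≤ dist (champagnePoint c ψ u i a t) (champagnePoint c ψ u i b s) := by
  rw [dist_champagnePoint_same_vertex hu]
  simpa using abs_im_le_norm (↑(a - b) * I + ↑(t - s))

theorem dist_champagnePoint_eq_abs_sub {i : ι} (hu : ‖u i‖ = 1) (a b t : ℝ) :
    dist (champagnePoint c ψ u i a t) (champagnePoint c ψ u i b t) = |a - b| := by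
  rw [dist_champagnePoint_same_vertex hu, sub_self, ofReal_zero, add_zero, norm_mul, norm_I,
    mul_one, norm_real, Real.norm_eq_abs]

theorem dist_champagnePoint_sq (horth : ∀ i j z, ⟪c i - c j, ψ z⟫_ℝ = 0) (i j : ι)
    (a b t s : ℝ) :
    dist (champagnePoint c ψ u i a t) (champagnePoint c ψ u j b s) ^ 2 =
      dist (c i) (c j) ^ 2 + ‖(a * I + t) * u i - (b * I + s) * u j‖ ^ 2 := by
  rw [dist_eq_norm, dist_eq_norm, champagnePoint, champagnePoint, add_sub_add_comm, ← map_sub,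
    norm_add_sq_real, horth, LinearIsometry.norm_map]
  ring

theorem dist_le_dist_champagnePoint (horth : ∀ i j z, ⟪c i - c j, ψ z⟫_ℝ = 0) (i j : ι)
    (a b t s : ℝ) :
    dist (c i) (c j) ≤ dist (champagnePoint c ψ u i a t) (champagnePoint c ψ u j b s) := by
  refine le_of_pow_le_pow_left₀ two_ne_zero dist_nonneg ?_
  rw [dist_champagnePoint_sq horth]
  exact le_add_of_nonneg_right (sq_nonneg _)

theorem exists_dist_champagnePoint_eq (horth : ∀ i j z, ⟪c i - c j, ψ z⟫_ℝ = 0) {i j : ι}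
    (huv : (conj (u i) * u j).im ≠ 0) (a b : ℝ) :
    ∃ t s,
      dist (champagnePoint c ψ u i a t) (champagnePoint c ψ u j b s) = dist (c i) (c j) := by
  obtain ⟨t, s, hts⟩ := exists_ofReal_mul_add_ofReal_mul_eq huv (b * I * u j - a * I * u i)
  refine ⟨t, -s, (sq_eq_sq₀ dist_nonneg dist_nonneg).1 ?_⟩
  have hmeet : (a * I + t) * u i - (b * I + ↑(-s)) * u j = 0 := by
    push_cast
    linear_combination hts
  rw [dist_champagnePoint_sq horth, hmeet, norm_zero]
  ring

theorem champagnePoint_unit_dist (hc : ∀ i j, i ≠ j → dist (c i) (c j) = 1)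
    (horth : ∀ i j z, ⟪c i - c j, ψ z⟫_ℝ = 0) (hu : ∀ i, ‖u i‖ = 1)
    (huv : ∀ i j, i ≠ j → (conj (u i) * u j).im ≠ 0) {i j : ι} {a b : ℝ}
    (hab : i = j → |a - b| = 1) :
    (∀ p ∈ Set.range (champagnePoint c ψ u i a), ∀ q ∈ Set.range (champagnePoint c ψ u j b),
        1 ≤ dist p q) ∧
      ∃ p ∈ Set.range (champagnePoint c ψ u i a), ∃ q ∈ Set.range (champagnePoint c ψ u j b),
        dist p q = 1 := by
  simp only [Set.forall_mem_range, Set.exists_range_iff]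
  by_cases hij : i = j
  · subst hij
    rw [← hab rfl]
    exact ⟨abs_sub_le_dist_champagnePoint (hu i) a b, 0, 0,
      dist_champagnePoint_eq_abs_sub (hu i) a b 0⟩
  · rw [← hc i j hij]
    exact ⟨dist_le_dist_champagnePoint horth i j a b,
      exists_dist_champagnePoint_eq horth (huv i j hij) a b⟩

end Champagne

/-- For every `n ≥ 3` there is a collection of `2n - 2` pairwise non-intersecting lines
in `ℝⁿ` such that the distance between any two distinct lines is exactly 1 (i.e. all
pairwise point distances are at least 1, and distance 1 is attained). -/
theorem champagne_lower_bound (n : ℕ) (hn : 3 ≤ n) :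
    ∃ L : Fin (2 * n - 2) → Set (EuclideanSpace ℝ (Fin n)),
      (∀ k, ∃ (p d : EuclideanSpace ℝ (Fin n)), d ≠ 0 ∧
        L k = {x | ∃ t : ℝ, x = p + t • d}) ∧
      ∀ k l, k ≠ l →
        L k ∩ L l = ∅ ∧
        (∀ p ∈ L k, ∀ q ∈ L l, 1 ≤ dist p q) ∧
        (∃ p ∈ L k, ∃ q ∈ L l, dist p q = 1) := by
  obtain ⟨c, ψ, hc, horth⟩ :=
    EuclideanSpace.exists_unit_simplex_orthogonal_plane (n := n) (by omega)
  obtain ⟨u, hu, huv⟩ := exists_unit_complex_pairwise_im_conj_mul_ne_zero (n - 1)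
  let e : Fin (2 * n - 2) ≃ Fin (n - 1) × Fin 2 :=
    (finProdFinEquiv.trans (finCongr (by omega))).symm
  refine ⟨fun k => Set.range (champagnePoint c ψ u (e k).1 ((e k).2 : ℕ)),
    fun k => ⟨_, _, ?_, range_champagnePoint c ψ u _ _⟩, fun k l hkl => ?_⟩
  · rw [← norm_ne_zero_iff, LinearIsometry.norm_map, hu]
    exact one_ne_zero
  have hunit := champagnePoint_unit_dist hc horth hu huv
    fun hij => Fin.abs_sub_eq_one_of_ne fun hab => hkl (e.injective (Prod.ext hij hab))
  exact ⟨inter_eq_empty_of_forall_le_dist one_pos hunit.1, hunit⟩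
end

section
/- Suppose L_1, …, L_N are lines in ℝ³ such that the distance between any two distinct lines is exactly 1, and suppose at least three of the lines are pairwise parallel. Then N ≤ 3. -/
open scoped RealInnerProductSpace

local notation "E3" => EuclideanSpace ℝ (Fin 3)

lemma orth4 (w x y z : E3) (hw : w ≠ 0) (hx : x ≠ 0) (hy : y ≠ 0)
    (hwx : ⟪w, x⟫ = 0) (hwy : ⟪w, y⟫ = 0) (hwz : ⟪w, z⟫ = 0)
    (hxy : ⟪x, y⟫ = 0) (hxz : ⟪x, z⟫ = 0) (hyz : ⟪y, z⟫ = 0) : z = 0 := by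
  by_contra hz
  set f : Fin 4 → E3 := ![w, x, y, z] with hf
  have hfne : ∀ i, f i ≠ 0 := by
    intro i; fin_cases i <;> simpa [hf]
  have horth : ∀ i j, i ≠ j → ⟪f i, f j⟫ = 0 := by
    intro i j hij
    fin_cases i <;> fin_cases j <;>
      simp only [hf, Matrix.cons_val_zero, Matrix.cons_val_one, Matrix.head_cons,
        Matrix.cons_val_two, Matrix.cons_val_three, Matrix.tail_cons, Fin.mk_one,
        Matrix.cons_val', Matrix.cons_val_fin_one, Fin.isValue] <;>
      first
        | exact absurd rfl hij
        | assumption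
        | (rw [real_inner_comm]; assumption)
  have hon : Orthonormal ℝ (fun i => (‖f i‖)⁻¹ • f i) := by
    rw [orthonormal_iff_ite]
    intro i j
    by_cases h : i = j
    · subst h
      rw [if_pos rfl, real_inner_smul_left, real_inner_smul_right,
        real_inner_self_eq_norm_sq]
      have : ‖f i‖ ≠ 0 := norm_ne_zero_iff.mpr (hfne i)
      field_simp
    · rw [if_neg h, real_inner_smul_left, real_inner_smul_right, horth i j h]
      ring
  have := hon.linearIndependent.fintype_card_le_finrank
  simp at this

lemma coeff_zero (u x : E3) (c : ℝ) (hu : u ≠ 0) (hx : ⟪x, u⟫ = 0)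
    (h : x = c • u) : x = 0 := by
  rw [h, real_inner_smul_left] at hx
  rcases mul_eq_zero.mp hx with hc | h0
  · rw [h, hc, zero_smul]
  · exact absurd (inner_self_eq_zero.mp h0) hu

lemma one_dim (u e v w : E3) (hu : u ≠ 0) (he : e ≠ 0) (hue : ⟪u, e⟫ = 0)
    (hvu : ⟪v, u⟫ = 0) (hve : ⟪v, e⟫ = 0) (hwu : ⟪w, u⟫ = 0) (hwe : ⟪w, e⟫ = 0)
    (hv1 : ‖v‖ = 1) (hw1 : ‖w‖ = 1) : w = v ∨ w = -v := by
  have huv : ⟪u, v⟫ = 0 := by rw [real_inner_comm]; exact hvu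
  have huw : ⟪u, w⟫ = 0 := by rw [real_inner_comm]; exact hwu
  have hev : ⟪e, v⟫ = 0 := by rw [real_inner_comm]; exact hve
  have hew : ⟪e, w⟫ = 0 := by rw [real_inner_comm]; exact hwe
  have hvv : ⟪v, v⟫ = 1 := by rw [real_inner_self_eq_norm_sq, hv1]; norm_num
  set c : ℝ := ⟪v, w⟫ with hc
  have hv0 : v ≠ 0 := by intro h; rw [h, norm_zero] at hv1; norm_num at hv1
  have hw' : w - c • v = 0 := by
    apply orth4 u e v (w - c • v) hu he hv0 hue huv _ hev _ _
    · simp only [inner_sub_right, real_inner_smul_right, huv, huw]; ring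
    · simp only [inner_sub_right, real_inner_smul_right, hev, hew]; ring
    · simp only [inner_sub_right, real_inner_smul_right, hvv, ← hc]; ring
  have hwv : w = c • v := by rwa [sub_eq_zero] at hw'
  have habs : |c| = 1 := by
    have h2 := congrArg norm hwv
    rw [hw1, norm_smul, hv1, mul_one, Real.norm_eq_abs] at h2
    exact h2.symm
  rcases (abs_eq (by norm_num : (0:ℝ) ≤ 1)).mp habs with h1 | h1
  · left; rw [hwv, h1, one_smul]
  · right; rw [hwv, h1, neg_one_smul]

lemma span2 (u a b x : E3) (hu : u ≠ 0) (ha1 : ‖a‖ = 1) (hb1 : ‖b‖ = 1)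
    (hab : ⟪a, b⟫ = 1/2) (hau : ⟪a, u⟫ = 0) (hbu : ⟪b, u⟫ = 0) (hxu : ⟪x, u⟫ = 0) :
    ∃ s t : ℝ, x = s • a + t • b := by
  have hua : ⟪u, a⟫ = 0 := by rw [real_inner_comm]; exact hau
  have hub : ⟪u, b⟫ = 0 := by rw [real_inner_comm]; exact hbu
  have hux : ⟪u, x⟫ = 0 := by rw [real_inner_comm]; exact hxu
  have hba : ⟪b, a⟫ = 1/2 := by rw [real_inner_comm]; exact hab
  have haa : ⟪a, a⟫ = 1 := by rw [real_inner_self_eq_norm_sq, ha1]; norm_num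
  have hbb : ⟪b, b⟫ = 1 := by rw [real_inner_self_eq_norm_sq, hb1]; norm_num
  set b' : E3 := b - (1/2 : ℝ) • a with hb'
  have ha0 : a ≠ 0 := by intro h; rw [h, norm_zero] at ha1; norm_num at ha1
  have hab' : ⟪a, b'⟫ = 0 := by
    simp only [hb', inner_sub_right, real_inner_smul_right, hab, haa]; ring
  have hb'a : ⟪b', a⟫ = 0 := by rw [real_inner_comm]; exact hab'
  have hub' : ⟪u, b'⟫ = 0 := by
    simp only [hb', inner_sub_right, real_inner_smul_right, hub, hua]; ring
  have hb'n : ⟪b', b'⟫ = 3/4 := by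
    simp only [hb', inner_sub_right, inner_sub_left, real_inner_smul_right,
      real_inner_smul_left, hab, hba, haa, hbb]
    ring
  have hb'0 : b' ≠ 0 := by
    intro h; rw [h, inner_zero_left] at hb'n; norm_num at hb'n
  have hax : ⟪a, x⟫ = ⟪x, a⟫ := real_inner_comm x a
  have hb'x : ⟪b', x⟫ = ⟪x, b'⟫ := real_inner_comm x b'
  set r : ℝ := ⟪x, a⟫ with hr
  set s : ℝ := (4/3) * ⟪x, b'⟫ with hs
  have hx'0 : x - r • a - s • b' = 0 := by
    apply orth4 u a b' (x - r • a - s • b') hu ha0 hb'0 hua hub' _ hab' _ _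
    · simp only [inner_sub_right, real_inner_smul_right, hux, hua, hub']; ring
    · simp only [inner_sub_right, real_inner_smul_right, haa, hab', hax]; ring
    · simp only [inner_sub_right, real_inner_smul_right, hb'a, hb'n, hb'x, hs]; ring
  have hx : x = r • a + s • b' := by
    rw [sub_sub, sub_eq_zero] at hx'0; exact hx'0
  refine ⟨r - s * (1/2), s, ?_⟩
  rw [hx, hb']
  module


lemma line_dist (p1 p2 d e : E3)
    (hge : ∀ s t : ℝ, 1 ≤ ‖(p1 + s • d) - (p2 + t • e)‖)
    (heq : ∃ s t : ℝ, ‖(p1 + s • d) - (p2 + t • e)‖ = 1) :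
    ∃ (v : E3) (s t : ℝ), ‖v‖ = 1 ∧ ⟪v, d⟫ = 0 ∧ ⟪v, e⟫ = 0 ∧
      p1 - p2 = v + s • d + t • e := by
  obtain ⟨s₁, t₁, h1⟩ := heq
  set v : E3 := (p1 + s₁ • d) - (p2 + t₁ • e) with hv
  have key : ∀ s t : ℝ, 1 ≤ ‖v + s • d + t • e‖ := by
    intro s t
    have := hge (s₁ + s) (t₁ - t)
    have heqv : (p1 + (s₁ + s) • d) - (p2 + (t₁ - t) • e) = v + s • d + t • e := by
      rw [hv]; module
    rwa [heqv] at this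
  have keysq : ∀ s t : ℝ, 1 ≤ ‖v + s • d + t • e‖ ^ 2 := by
    intro s t
    have h := key s t
    nlinarith [norm_nonneg (v + s • d + t • e)]
  have hv1 : ‖v‖ = 1 := h1
  -- orthogonality to d
  have hvd : ⟪v, d⟫ = 0 := by
    by_contra hc
    set c : ℝ := ⟪v, d⟫ with hcdef
    have h := keysq (-(c / (‖d‖ ^ 2 + 1))) 0
    rw [zero_smul, add_zero] at h
    rw [norm_add_sq_real, real_inner_smul_right, norm_smul, hv1] at h
    have hd2 : (0:ℝ) ≤ ‖d‖ ^ 2 := sq_nonneg _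
    have hpos : (0:ℝ) < ‖d‖ ^ 2 + 1 := by linarith
    have hc2 : 0 < c ^ 2 := by positivity
    rw [Real.norm_eq_abs, mul_pow, sq_abs] at h
    rw [← hcdef, one_pow] at h
    have hne : (‖d‖ ^ 2 + 1) ≠ 0 := ne_of_gt hpos
    have hkey : (1:ℝ) + 2 * (-(c / (‖d‖ ^ 2 + 1)) * c) + (-(c / (‖d‖ ^ 2 + 1))) ^ 2 * ‖d‖ ^ 2
        = 1 - c ^ 2 * (‖d‖ ^ 2 + 2) / (‖d‖ ^ 2 + 1) ^ 2 := by
      field_simp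
      ring
    rw [hkey] at h
    have hpp : 0 < c ^ 2 * (‖d‖ ^ 2 + 2) / (‖d‖ ^ 2 + 1) ^ 2 := by positivity
    linarith
  have hve : ⟪v, e⟫ = 0 := by
    by_contra hc
    set c : ℝ := ⟪v, e⟫ with hcdef
    have h := keysq 0 (-(c / (‖e‖ ^ 2 + 1)))
    rw [zero_smul, add_zero] at h
    rw [norm_add_sq_real, real_inner_smul_right, norm_smul, hv1] at h
    have hd2 : (0:ℝ) ≤ ‖e‖ ^ 2 := sq_nonneg _
    have hpos : (0:ℝ) < ‖e‖ ^ 2 + 1 := by linarith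
    have hc2 : 0 < c ^ 2 := by positivity
    rw [Real.norm_eq_abs, mul_pow, sq_abs] at h
    rw [← hcdef, one_pow] at h
    have hne : (‖e‖ ^ 2 + 1) ≠ 0 := ne_of_gt hpos
    have hkey : (1:ℝ) + 2 * (-(c / (‖e‖ ^ 2 + 1)) * c) + (-(c / (‖e‖ ^ 2 + 1))) ^ 2 * ‖e‖ ^ 2
        = 1 - c ^ 2 * (‖e‖ ^ 2 + 2) / (‖e‖ ^ 2 + 1) ^ 2 := by
      field_simp
      ring
    rw [hkey] at h
    have hpp : 0 < c ^ 2 * (‖e‖ ^ 2 + 2) / (‖e‖ ^ 2 + 1) ^ 2 := by positivity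
    linarith
  refine ⟨v, -s₁, t₁, hv1, hvd, hve, ?_⟩
  rw [hv]; module

set_option maxHeartbeats 1000000 in
/-- If `L_1, …, L_N` are lines in `ℝ³` pairwise at distance exactly 1 (all pairwise
point distances are at least 1 and distance 1 is attained) and at least three of them
are pairwise parallel, then `N ≤ 3`. -/
theorem three_parallel_lines_bound (N : ℕ)
    (p d : Fin N → EuclideanSpace ℝ (Fin 3)) (hd : ∀ k, d k ≠ 0)
    (L : Fin N → Set (EuclideanSpace ℝ (Fin 3)))
    (hL : ∀ k, L k = {x | ∃ t : ℝ, x = p k + t • d k})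
    (hdist : ∀ k l, k ≠ l →
      (∀ x ∈ L k, ∀ y ∈ L l, 1 ≤ dist x y) ∧ (∃ x ∈ L k, ∃ y ∈ L l, dist x y = 1))
    (hpar : ∃ i j k : Fin N, i ≠ j ∧ i ≠ k ∧ j ≠ k ∧
      (∃ c : ℝ, d j = c • d i) ∧ (∃ c : ℝ, d k = c • d i)) :
    N ≤ 3 := by
  by_contra hN
  push_neg at hN
  obtain ⟨i, j, k, hij, hik, hjk, ⟨cj, hcj⟩, ⟨ck, hck⟩⟩ := hpar
  have hcj0 : cj ≠ 0 := by intro h; apply hd j; rw [hcj, h, zero_smul]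
  have hck0 : ck ≠ 0 := by intro h; apply hd k; rw [hck, h, zero_smul]
  -- find a fourth index
  have hm : ∃ m : Fin N, m ≠ i ∧ m ≠ j ∧ m ≠ k := by
    by_contra h
    push_neg at h
    have hsub : (Finset.univ : Finset (Fin N)) ⊆ {i, j, k} := by
      intro m _
      simp only [Finset.mem_insert, Finset.mem_singleton]
      by_cases h1 : m = i
      · exact Or.inl h1
      by_cases h2 : m = j
      · exact Or.inr (Or.inl h2)
      exact Or.inr (Or.inr (h m h1 h2))
    have hcard := Finset.card_le_card hsub
    have h3 : ({i, j, k} : Finset (Fin N)).card ≤ 3 := by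
      apply le_trans (Finset.card_insert_le _ _)
      have h4 : ({j, k} : Finset (Fin N)).card ≤ 2 := by
        apply le_trans (Finset.card_insert_le _ _)
        simp
      omega
    rw [Finset.card_univ, Fintype.card_fin] at hcard
    omega
  obtain ⟨m, hmi, hmj, hmk⟩ := hm
  -- convert hdist to norm form
  have pair : ∀ k' l', k' ≠ l' →
      (∀ s t : ℝ, 1 ≤ ‖(p k' + s • d k') - (p l' + t • d l')‖) ∧
      (∃ s t : ℝ, ‖(p k' + s • d k') - (p l' + t • d l')‖ = 1) := by
    intro k' l' hkl
    obtain ⟨h1, h2⟩ := hdist k' l' hkl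
    constructor
    · intro s t
      have hx : p k' + s • d k' ∈ L k' := by rw [hL]; exact ⟨s, rfl⟩
      have hy : p l' + t • d l' ∈ L l' := by rw [hL]; exact ⟨t, rfl⟩
      have := h1 _ hx _ hy
      rwa [dist_eq_norm] at this
    · obtain ⟨x, hx, y, hy, hxy⟩ := h2
      rw [hL] at hx hy
      obtain ⟨s, rfl⟩ := hx
      obtain ⟨t, rfl⟩ := hy
      exact ⟨s, t, by rwa [dist_eq_norm] at hxy⟩
  obtain ⟨a, sa, ta, ha1, hau, -, haeq⟩ :=
    line_dist (p i) (p j) (d i) (d j) (pair i j hij).1 (pair i j hij).2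
  obtain ⟨b, sb, tb, hb1, hbu, -, hbeq⟩ :=
    line_dist (p i) (p k) (d i) (d k) (pair i k hik).1 (pair i k hik).2
  obtain ⟨g, sg, tg, hg1, hgj, -, hgeq⟩ :=
    line_dist (p j) (p k) (d j) (d k) (pair j k hjk).1 (pair j k hjk).2
  obtain ⟨vA, sA, tA, hA1, hAw, hAu, hAeq⟩ :=
    line_dist (p m) (p i) (d m) (d i) (pair m i hmi).1 (pair m i hmi).2
  obtain ⟨vB, sB, tB, hB1, hBw, hBj, hBeq⟩ :=
    line_dist (p m) (p j) (d m) (d j) (pair m j hmj).1 (pair m j hmj).2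
  obtain ⟨vC, sC, tC, hC1, hCw, hCk, hCeq⟩ :=
    line_dist (p m) (p k) (d m) (d k) (pair m k hmk).1 (pair m k hmk).2
  -- orthogonality to d i for g, vB, vC
  have hgu : ⟪g, d i⟫ = 0 := by
    rw [hcj, real_inner_smul_right] at hgj
    exact (mul_eq_zero.mp hgj).resolve_left hcj0
  have hBu : ⟪vB, d i⟫ = 0 := by
    rw [hcj, real_inner_smul_right] at hBj
    exact (mul_eq_zero.mp hBj).resolve_left hcj0
  have hCu : ⟪vC, d i⟫ = 0 := by
    rw [hck, real_inner_smul_right] at hCk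
    exact (mul_eq_zero.mp hCk).resolve_left hck0
  -- rewrite line equations with a,b,g,vA,vB,vC isolated
  have ha' : a = p i - p j - (sa + ta * cj) • d i := by
    rw [haeq, hcj]; module
  have hb' : b = p i - p k - (sb + tb * ck) • d i := by
    rw [hbeq, hck]; module
  have hg' : g = p j - p k - (sg * cj + tg * ck) • d i := by
    rw [hgeq, hcj, hck]; module
  have hvA : vA = p m - p i - sA • d m - tA • d i := by rw [hAeq]; abel
  have hvB : vB = p m - p j - sB • d m - (tB * cj) • d i := by
    rw [hBeq, hcj]; module
  have hvC : vC = p m - p k - sC • d m - (tC * ck) • d i := by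
    rw [hCeq, hck]; module
  -- g = b - a
  have e0 : g - (b - a) =
      ((sb + tb * ck) - (sg * cj + tg * ck) - (sa + ta * cj)) • d i := by
    rw [ha', hb', hg']; module
  have hg_ba : g = b - a := by
    have h0 := coeff_zero (d i) (g - (b - a)) _ (hd i)
      (by simp only [inner_sub_left, hgu, hbu, hau]; ring) e0
    rwa [sub_eq_zero] at h0
  -- inner products among a, b
  have haa : ⟪a, a⟫ = 1 := by rw [real_inner_self_eq_norm_sq, ha1]; norm_num
  have hbb : ⟪b, b⟫ = 1 := by rw [real_inner_self_eq_norm_sq, hb1]; norm_num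
  have hAA : ⟪vA, vA⟫ = 1 := by rw [real_inner_self_eq_norm_sq, hA1]; norm_num
  have hba : ⟪b, a⟫ = 1/2 := by
    have h' : ‖b - a‖ ^ 2 = 1 := by rw [← hg_ba, hg1]; norm_num
    rw [norm_sub_sq_real, hb1, ha1] at h'
    linarith
  have hab : ⟪a, b⟫ = 1/2 := by rw [real_inner_comm]; exact hba
  -- relations between a,b and the v's
  have ea : a = (vB - vA) + (sB - sA) • d m
      + (tB * cj - tA - (sa + ta * cj)) • d i := by
    rw [ha', hvA, hvB]; module
  have eb : b = (vC - vA) + (sC - sA) • d m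
      + (tC * ck - tA - (sb + tb * ck)) • d i := by
    rw [hb', hvA, hvC]; module
  by_cases hpw : ∃ μ : ℝ, d m = μ • d i
  · -- Case 1 : fourth line parallel as well
    obtain ⟨μ, hμ⟩ := hpw
    have ea0 : a - (vB - vA) =
        ((sB - sA) * μ + (tB * cj - tA - (sa + ta * cj))) • d i := by
      rw [ea, hμ]; module
    have haBA : a = vB - vA := by
      have h0 := coeff_zero (d i) (a - (vB - vA)) _ (hd i)
        (by simp only [inner_sub_left, hau, hBu, hAu]; ring) ea0
      rwa [sub_eq_zero] at h0
    have eb0 : b - (vC - vA) =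
        ((sC - sA) * μ + (tC * ck - tA - (sb + tb * ck))) • d i := by
      rw [eb, hμ]; module
    have hbCA : b = vC - vA := by
      have h0 := coeff_zero (d i) (b - (vC - vA)) _ (hd i)
        (by simp only [inner_sub_left, hbu, hCu, hAu]; ring) eb0
      rwa [sub_eq_zero] at h0
    have hvAa : ⟪vA, a⟫ = -(1/2) := by
      have hvBa : vB = vA + a := by rw [haBA]; abel
      have h' : ‖vA + a‖ ^ 2 = 1 := by rw [← hvBa, hB1]; norm_num
      rw [norm_add_sq_real, hA1, ha1] at h'
      linarith
    have hvAb : ⟪vA, b⟫ = -(1/2) := by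
      have hvCb : vC = vA + b := by rw [hbCA]; abel
      have h' : ‖vA + b‖ ^ 2 = 1 := by rw [← hvCb, hC1]; norm_num
      rw [norm_add_sq_real, hA1, hb1] at h'
      linarith
    obtain ⟨x, y, hxy⟩ := span2 (d i) a b vA (hd i) ha1 hb1 hab hau hbu hAu
    have hxa : x + y * (1/2) = -(1/2) := by
      have h' := hvAa
      rw [hxy, inner_add_left, real_inner_smul_left, real_inner_smul_left, haa, hba] at h'
      linarith
    have hxb : x * (1/2) + y = -(1/2) := by
      have h' := hvAb
      rw [hxy, inner_add_left, real_inner_smul_left, real_inner_smul_left, hab, hbb] at h'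
      linarith
    have hx3 : x = -(1/3) := by linarith
    have hy3 : y = -(1/3) := by linarith
    have h1' := hAA
    rw [hxy] at h1'
    simp only [inner_add_left, inner_add_right, real_inner_smul_left,
      real_inner_smul_right, haa, hbb, hab, hba] at h1'
    rw [hx3, hy3] at h1'
    norm_num at h1'
  · -- Case 2 : fourth line not parallel
    push_neg at hpw
    have hdii : ⟪d i, d i⟫ ≠ 0 := fun h => hd i (inner_self_eq_zero.mp h)
    obtain ⟨μ₀, hμ₀⟩ : ∃ r : ℝ, r = ⟪d m, d i⟫ / ⟪d i, d i⟫ := ⟨_, rfl⟩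
    obtain ⟨w', hw'⟩ : ∃ w' : E3, w' = d m - μ₀ • d i := ⟨_, rfl⟩
    have hw'0 : w' ≠ 0 := by
      intro h
      rw [hw'] at h
      exact hpw μ₀ (sub_eq_zero.mp h)
    have hw'u : ⟪w', d i⟫ = 0 := by
      rw [hw', inner_sub_left, real_inner_smul_left, hμ₀,
        div_mul_cancel₀ _ hdii, sub_self]
    have huw' : ⟪d i, w'⟫ = 0 := by rw [real_inner_comm]; exact hw'u
    have hAw' : ⟪vA, w'⟫ = 0 := by
      rw [hw', inner_sub_right, real_inner_smul_right, hAw, hAu]; ring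
    have hBw' : ⟪vB, w'⟫ = 0 := by
      rw [hw', inner_sub_right, real_inner_smul_right, hBw, hBu]; ring
    have hCw' : ⟪vC, w'⟫ = 0 := by
      rw [hw', inner_sub_right, real_inner_smul_right, hCw, hCu]; ring
    have hBcase := one_dim (d i) w' vA vB (hd i) hw'0 huw' hAu hAw' hBu hBw' hA1 hB1
    have hCcase := one_dim (d i) w' vA vC (hd i) hw'0 huw' hAu hAw' hCu hCw' hA1 hC1
    -- helper facts for Cauchy-Schwarz contradictions
    have hdmA : ⟪d m, vA⟫ = 0 := by rw [real_inner_comm]; exact hAw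
    have hdiA : ⟪d i, vA⟫ = 0 := by rw [real_inner_comm]; exact hAu
    rcases hBcase with hBA | hBA
    · rcases hCcase with hCA | hCA
      · -- vB = vA and vC = vA
        have ea2 : a - (sB - sA) • w' =
            ((sB - sA) * μ₀ + (tB * cj - tA - (sa + ta * cj))) • d i := by
          rw [ea, hBA, hw']; module
        have haS : a = (sB - sA) • w' := by
          have h0 := coeff_zero (d i) (a - (sB - sA) • w') _ (hd i)
            (by simp only [inner_sub_left, real_inner_smul_left, hau, hw'u]; ring) ea2
          rwa [sub_eq_zero] at h0
        have eb2 : b - (sC - sA) • w' =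
            ((sC - sA) * μ₀ + (tC * ck - tA - (sb + tb * ck))) • d i := by
          rw [eb, hCA, hw']; module
        have hbS : b = (sC - sA) • w' := by
          have h0 := coeff_zero (d i) (b - (sC - sA) • w') _ (hd i)
            (by simp only [inner_sub_left, real_inner_smul_left, hbu, hw'u]; ring) eb2
          rwa [sub_eq_zero] at h0
        have e1 : (sB - sA) * ((sB - sA) * ⟪w', w'⟫) = 1 := by
          have h' := haa
          rw [haS, real_inner_smul_left, real_inner_smul_right] at h'
          exact h'
        have e2 : (sC - sA) * ((sC - sA) * ⟪w', w'⟫) = 1 := by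
          have h' := hbb
          rw [hbS, real_inner_smul_left, real_inner_smul_right] at h'
          exact h'
        have e3 : (sB - sA) * ((sC - sA) * ⟪w', w'⟫) = 1/2 := by
          have h' := hab
          rw [haS, hbS, real_inner_smul_left, real_inner_smul_right] at h'
          exact h'
        have hWW : ((sB - sA) * ((sC - sA) * ⟪w', w'⟫)) *
            ((sB - sA) * ((sC - sA) * ⟪w', w'⟫)) =
            ((sB - sA) * ((sB - sA) * ⟪w', w'⟫)) *
            ((sC - sA) * ((sC - sA) * ⟪w', w'⟫)) := by ring
        rw [e1, e2, e3] at hWW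
        norm_num at hWW
      · -- vC = -vA : contradiction via b
        have hbv : ⟪b, vA⟫ = -2 := by
          rw [eb, hCA]
          simp only [inner_add_left, inner_sub_left, real_inner_smul_left, hAA,
            hdmA, hdiA, inner_neg_left]
          ring
        have hcs := abs_real_inner_le_norm b vA
        rw [hbv, hb1, hA1] at hcs
        norm_num at hcs
    · -- vB = -vA : contradiction via a
      have hav : ⟪a, vA⟫ = -2 := by
        rw [ea, hBA]
        simp only [inner_add_left, inner_sub_left, real_inner_smul_left, hAA,
          hdmA, hdiA, inner_neg_left]
        ring
      have hcs := abs_real_inner_le_norm a vA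
      rw [hav, ha1, hA1] at hcs
      norm_num at hcs
end

section
/- Let L and L' be two parallel lines in ℝ³ at distance 1, spanning a plane P. Then any line at distance exactly 1 from both L and L' must lie in one of the two planes parallel to P at distance 1 from P, unless it is itself parallel to L; moreover, any collection of lines in ℝ³ pairwise at distance 1 that contains two parallel lines and no third line parallel to them has at most 4 elements. -/
/-!
Project along `d` onto `dᗮ`, a plane since the ambient space is three-dimensional. The lines `L`,
`L'` become two points at distance 1, and `M` becomes a line (or a point, when `M ∥ L`) at distance
1 from both. The feet of the perpendiculars from the two points to it are unit vectors orthogonal to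
both `d` and the projected direction of `M`, hence equal or opposite. Opposite feet would put the
two points at distance 2; equal feet make the projected line parallel to the segment joining them,
at height 1 over it, so `M` lies in a plane parallel to `P` at distance 1.

For the bound, every line of the collection other than the parallel pair lies in one of these two
planes. Two lines in opposite planes are at distance at least 2, and two lines of one plane at
positive distance are parallel; but three parallel coplanar lines cannot be pairwise at distance 1,
as their traces on a normal plane would be three collinear points pairwise at distance 1.
-/

open scoped RealInnerProductSpace
open Module Submodule

def line {F : Type*} [AddCommGroup F] [Module ℝ F] (p d : F) : Set F :=
  {x | ∃ t : ℝ, x = p + t • d}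

def DistAttained {α : Type*} [PseudoMetricSpace α] (S T : Set α) (r : ℝ) : Prop :=
  (∀ x ∈ S, ∀ y ∈ T, r ≤ dist x y) ∧ ∃ x ∈ S, ∃ y ∈ T, dist x y = r

section Line

variable {F : Type*} [AddCommGroup F] [Module ℝ F]

theorem add_smul_mem_line (p d : F) (t : ℝ) : p + t • d ∈ line p d := ⟨t, rfl⟩

theorem line_smul (p d : F) {c : ℝ} (hc : c ≠ 0) : line p (c • d) = line p d := by
  ext x
  constructor
  · rintro ⟨t, rfl⟩
    exact ⟨t * c, by rw [smul_smul]⟩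
  · rintro ⟨t, rfl⟩
    exact ⟨t / c, by rw [smul_smul, div_mul_cancel₀ _ hc]⟩

end Line

variable {F : Type*} [NormedAddCommGroup F] [InnerProductSpace ℝ F]

theorem inner_eq_zero_of_forall_norm_le_norm_add_smul {x v : F}
    (h : ∀ t : ℝ, ‖x‖ ≤ ‖x + t • v‖) : ⟪x, v⟫ = 0 := by
  rcases eq_or_ne v 0 with rfl | hv
  · exact inner_zero_right x
  have hv2 : ‖v‖ ^ 2 ≠ 0 := by positivity
  -- evaluate at the minimiser `t = -⟪x, v⟫ / ‖v‖²` of `t ↦ ‖x + t • v‖²`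
  have key := pow_le_pow_left₀ (norm_nonneg x) (h (-⟪x, v⟫ / ‖v‖ ^ 2)) 2
  rw [norm_add_sq_real, norm_smul, real_inner_smul_right, mul_pow, Real.norm_eq_abs, sq_abs] at key
  field_simp at key
  exact pow_eq_zero_iff two_ne_zero |>.mp (le_antisymm (by linarith) (sq_nonneg _))

theorem norm_le_norm_add_smul_of_inner_eq_zero {x v : F} (h : ⟪x, v⟫ = 0) (t : ℝ) :
    ‖x‖ ≤ ‖x + t • v‖ := by
  refine le_of_pow_le_pow_left₀ two_ne_zero (norm_nonneg _) ?_
  rw [norm_add_sq_real, real_inner_smul_right, h]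
  nlinarith [sq_nonneg ‖t • v‖]

theorem inner_starProjection_orthogonal_singleton (d w : F) :
    ⟪d, (ℝ ∙ d)ᗮ.starProjection w⟫ = 0 :=
  mem_orthogonal_singleton_iff_inner_right.mp (starProjection_apply_mem _ w)

theorem inner_starProjection_orthogonal_singleton_of_inner_eq_zero {d n : F} (h : ⟪d, n⟫ = 0)
    (w : F) :
    ⟪(ℝ ∙ d)ᗮ.starProjection w, n⟫ = ⟪w, n⟫ := by
  rw [inner_starProjection_left_eq_right,
    starProjection_eq_self_iff.mpr (mem_orthogonal_singleton_iff_inner_right.mpr h)]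

theorem exists_eq_smul_add_starProjection_orthogonal_singleton (d w : F) :
    ∃ s : ℝ, w = s • d + (ℝ ∙ d)ᗮ.starProjection w := by
  obtain ⟨s, hs⟩ := mem_span_singleton.mp ((ℝ ∙ d).starProjection_apply_mem w)
  exact ⟨s, by rw [hs, starProjection_add_starProjection_orthogonal]⟩

theorem exists_eq_smul_of_starProjection_orthogonal_singleton_eq_zero {d w : F}
    (h : (ℝ ∙ d)ᗮ.starProjection w = 0) : ∃ c : ℝ, w = c • d := by
  obtain ⟨s, hs⟩ := exists_eq_smul_add_starProjection_orthogonal_singleton d w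
  exact ⟨s, by rw [hs, h, add_zero]⟩

theorem DistAttained.starProjection_line {a b d e : F} {r : ℝ}
    (h : DistAttained (line b e) (line a d) r) :
    DistAttained (line ((ℝ ∙ d)ᗮ.starProjection (b - a)) ((ℝ ∙ d)ᗮ.starProjection e)) {0} r := by
  set P := (ℝ ∙ d)ᗮ.starProjection
  have hP : ∀ t : ℝ, P (b + t • e - a) = P (b - a) + t • P e := by
    intro t
    rw [add_sub_right_comm, map_add, map_smul]
  have lower : ∀ t : ℝ, r ≤ ‖P (b - a) + t • P e‖ := by
    intro t
    obtain ⟨s, hs⟩ := exists_eq_smul_add_starProjection_orthogonal_singleton d (b + t • e - a)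
    have hfoot : b + t • e - (a + s • d) = P (b + t • e - a) := by
      rw [← sub_sub]
      nth_rewrite 1 [hs]
      exact add_sub_cancel_left _ _
    have := h.1 _ (add_smul_mem_line b e t) _ (add_smul_mem_line a d s)
    rwa [dist_eq_norm, hfoot, hP] at this
  refine ⟨fun x ⟨t, hx⟩ y hy => ?_, ?_⟩
  · rw [hx, Set.mem_singleton_iff.mp hy, dist_zero_right]
    exact lower t
  · obtain ⟨_, ⟨t, rfl⟩, _, ⟨s, rfl⟩, hts⟩ := h.2
    refine ⟨_, add_smul_mem_line _ _ t, 0, rfl, le_antisymm ?_ (by simpa using lower t)⟩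
    have hPs : P (b + t • e - (a + s • d)) = P (b + t • e - a) := by
      rw [← sub_sub, map_sub _ _ (s • d), map_smul,
        starProjection_orthogonalComplement_singleton_eq_zero, smul_zero, sub_zero]
    rw [dist_zero_right, ← hP t, ← hPs, ← hts, dist_eq_norm]
    simpa using P.le_of_opNorm_le (starProjection_norm_le _) (b + t • e - (a + s • d))

theorem DistAttained.exists_norm_eq_inner_eq_zero {w v : F} {r : ℝ}
    (h : DistAttained (line w v) {0} r) : ∃ t : ℝ, ‖w + t • v‖ = r ∧ ⟪w + t • v, v⟫ = 0 := by
  obtain ⟨_, ⟨t, rfl⟩, _, rfl, ht⟩ := h.2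
  rw [dist_zero_right] at ht
  refine ⟨t, ht, inner_eq_zero_of_forall_norm_le_norm_add_smul fun s => ?_⟩
  rw [ht, add_assoc, ← add_smul]
  simpa using h.1 _ (add_smul_mem_line w v (t + s)) 0 rfl

theorem DistAttained.norm_starProjection_sub {p q e : F} {r : ℝ}
    (h : DistAttained (line q e) (line p e) r) : ‖(ℝ ∙ e)ᗮ.starProjection (q - p)‖ = r := by
  obtain ⟨t, ht, -⟩ := h.starProjection_line.exists_norm_eq_inner_eq_zero
  rwa [starProjection_orthogonalComplement_singleton_eq_zero, smul_zero, add_zero] at ht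

theorem inner_eq_of_forall_mem_line {a n p e : F} {c : ℝ}
    (h : ∀ x ∈ line p e, ⟪x - a, n⟫ = c) : ⟪p - a, n⟫ = c ∧ ⟪e, n⟫ = 0 := by
  have h₀ := h _ (add_smul_mem_line p e 0)
  have h₁ := h _ (add_smul_mem_line p e 1)
  rw [zero_smul, add_zero] at h₀
  rw [one_smul, add_sub_right_comm, inner_add_left, h₀] at h₁
  exact ⟨h₀, by linarith⟩

theorem inner_starProjection_eq_zero_of_forall_inner_eq {a n p q e f : F} {c : ℝ}
    (hp : ∀ x ∈ line p e, ⟪x - a, n⟫ = c) (hq : ∀ x ∈ line q f, ⟪x - a, n⟫ = c) :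
    ⟪n, (ℝ ∙ e)ᗮ.starProjection (q - p)⟫ = 0 ∧ ⟪n, (ℝ ∙ e)ᗮ.starProjection f⟫ = 0 := by
  obtain ⟨hpa, hen⟩ := inner_eq_of_forall_mem_line hp
  obtain ⟨hqa, hfn⟩ := inner_eq_of_forall_mem_line hq
  refine ⟨?_, ?_⟩
  · rw [real_inner_comm, inner_starProjection_orthogonal_singleton_of_inner_eq_zero hen,
      ← sub_sub_sub_cancel_right q p a, inner_sub_left, hpa, hqa, sub_self]
  · rw [real_inner_comm, inner_starProjection_orthogonal_singleton_of_inner_eq_zero hen, hfn]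

theorem ne_neg_of_distAttained_of_forall_inner_eq_one {S T : Set F} {a n n' : F} {r : ℝ}
    (hn : ‖n‖ = 1) (hS : ∀ x ∈ S, ⟪x - a, n⟫ = 1) (hT : ∀ y ∈ T, ⟪y - a, n'⟫ = 1)
    (h : DistAttained S T r) (hr : r < 2) : n' ≠ -n := by
  rintro rfl
  obtain ⟨x, hx, y, hy, hxy⟩ := h.2
  have hx' := hS x hx
  have hy' := hT y hy
  rw [inner_neg_right] at hy'
  have h2 : ⟪x - y, n⟫ = 2 := by
    rw [← sub_sub_sub_cancel_right x y a, inner_sub_left]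
    linarith
  have := real_inner_le_norm (x - y) n
  rw [h2, hn, mul_one, ← dist_eq_norm, hxy] at this
  linarith

section ThreeDim
variable [Fact (finrank ℝ F = 3)]

theorem exists_eq_smul_of_inner_eq_zero {d v x y : F} (hd : d ≠ 0) (hv : v ≠ 0) (hx : x ≠ 0)
    (hdv : ⟪d, v⟫ = 0) (hdx : ⟪d, x⟫ = 0) (hvx : ⟪v, x⟫ = 0) (hdy : ⟪d, y⟫ = 0)
    (hvy : ⟪v, y⟫ = 0) : ∃ c : ℝ, y = c • x := by
  have hli : LinearIndependent ℝ ![d, v, x] := by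
    refine linearIndependent_of_ne_zero_of_inner_eq_zero (fun i => ?_) fun i j hij => ?_
    · fin_cases i <;> assumption
    · fin_cases i <;> fin_cases j <;> simp_all [real_inner_comm]
  have hcard : Fintype.card (Fin 3) = finrank ℝ F := by simp [(Fact.out : finrank ℝ F = 3)]
  let b := basisOfLinearIndependentOfCardEqFinrank hli hcard
  refine ⟨⟪x, y⟫ / ‖x‖ ^ 2, InnerProductSpace.ext_inner_left_basis b fun i => ?_⟩
  have hx2 : ‖x‖ ^ 2 ≠ 0 := by positivity
  fin_cases i <;> simp [b, real_inner_smul_right, hdy, hvy, hdx, hvx, hx2]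

theorem eq_or_eq_neg_of_inner_eq_zero {d v x y : F} (hd : d ≠ 0) (hv : v ≠ 0)
    (hdv : ⟪d, v⟫ = 0) (hx : ‖x‖ = 1) (hy : ‖y‖ = 1) (hdx : ⟪d, x⟫ = 0) (hvx : ⟪v, x⟫ = 0)
    (hdy : ⟪d, y⟫ = 0) (hvy : ⟪v, y⟫ = 0) : y = x ∨ y = -x := by
  obtain ⟨c, rfl⟩ := exists_eq_smul_of_inner_eq_zero hd hv (norm_ne_zero_iff.mp (by simp [hx]))
    hdv hdx hvx hdy hvy
  rw [norm_smul, hx, mul_one, Real.norm_eq_abs] at hy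
  rcases abs_eq zero_le_one |>.mp hy with rfl | rfl <;> simp

theorem eq_zero_or_exists_inner_eq_one_of_distAttained {d u w v : F} (hd : d ≠ 0)
    (hu : ‖u‖ < 2) (hdu : ⟪d, u⟫ = 0) (hdw : ⟪d, w⟫ = 0) (hdv : ⟪d, v⟫ = 0)
    (h : DistAttained (line w v) {0} 1) (h' : DistAttained (line (w + u) v) {0} 1) :
    v = 0 ∨ ∃ n : F, ‖n‖ = 1 ∧ ⟪d, n⟫ = 0 ∧ ⟪u, n⟫ = 0 ∧ ∀ t : ℝ, ⟪w + t • v, n⟫ = 1 := by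
  rcases eq_or_ne v 0 with hv | hv
  · exact Or.inl hv
  obtain ⟨t₁, h₁, h₁v⟩ := h.exists_norm_eq_inner_eq_zero
  obtain ⟨t₂, h₂, h₂v⟩ := h'.exists_norm_eq_inner_eq_zero
  have hd₁ : ⟪d, w + t₁ • v⟫ = 0 := by
    rw [inner_add_right, real_inner_smul_right, hdw, hdv, mul_zero, add_zero]
  have hd₂ : ⟪d, w + u + t₂ • v⟫ = 0 := by
    rw [inner_add_right, inner_add_right, real_inner_smul_right, hdw, hdu, hdv]
    ring
  rcases eq_or_eq_neg_of_inner_eq_zero hd hv hdv h₁ h₂ hd₁ (by rwa [real_inner_comm]) hd₂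
    (by rwa [real_inner_comm]) with heq | hneg
  · have hu' : u = (t₁ - t₂) • v := by linear_combination (norm := module) heq
    refine Or.inr ⟨w + t₁ • v, h₁, hd₁, ?_, fun t => ?_⟩
    · rw [hu', real_inner_smul_left, real_inner_comm, h₁v, mul_zero]
    · rw [show w + t • v = w + t₁ • v + (t - t₁) • v by module, inner_add_left,
        real_inner_smul_left, real_inner_comm (w + t₁ • v) v, h₁v, real_inner_self_eq_norm_sq, h₁]
      norm_num
  · -- opposite feet: `u` is `-2 •` a unit vector orthogonal to `v` plus a multiple of `v`
    have hu' : u = (-2 : ℝ) • (w + t₁ • v) + (t₁ - t₂) • v := by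
      linear_combination (norm := module) hneg
    have := norm_le_norm_add_smul_of_inner_eq_zero (x := (-2 : ℝ) • (w + t₁ • v))
      (by rw [real_inner_smul_left, h₁v, mul_zero]) (t₁ - t₂)
    rw [← hu', norm_smul, h₁] at this
    norm_num at this
    linarith

theorem DistAttained.parallel_or_inner_eq_one {a a' b d e : F} (hd : d ≠ 0)
    (hLL : DistAttained (line a d) (line a' d) 1) (hM : DistAttained (line b e) (line a d) 1)
    (hM' : DistAttained (line b e) (line a' d) 1) :
    (∃ c : ℝ, e = c • d) ∨
      ∃ n : F, ‖n‖ = 1 ∧ ⟪n, d⟫ = 0 ∧ ⟪n, a' - a⟫ = 0 ∧ ∀ x ∈ line b e, ⟪x - a, n⟫ = 1 := by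
  set P := (ℝ ∙ d)ᗮ.starProjection
  have hu : ‖P (a - a')‖ = 1 := hLL.norm_starProjection_sub
  have hM'' : DistAttained (line (P (b - a) + P (a - a')) (P e)) {0} 1 := by
    rw [← map_add, sub_add_sub_cancel]
    exact hM'.starProjection_line
  rcases eq_zero_or_exists_inner_eq_one_of_distAttained hd (by rw [hu]; norm_num)
      (inner_starProjection_orthogonal_singleton d _)
      (inner_starProjection_orthogonal_singleton d _)
      (inner_starProjection_orthogonal_singleton d _) hM.starProjection_line hM''
    with hv | ⟨n, hn, hdn, hun, hline⟩
  · exact Or.inl (exists_eq_smul_of_starProjection_orthogonal_singleton_eq_zero hv)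
  refine Or.inr ⟨n, hn, by rwa [real_inner_comm], ?_, ?_⟩
  · rw [real_inner_comm, ← neg_sub, inner_neg_left,
      ← inner_starProjection_orthogonal_singleton_of_inner_eq_zero hdn, hun, neg_zero]
  · rintro _ ⟨t, rfl⟩
    rw [← inner_starProjection_orthogonal_singleton_of_inner_eq_zero hdn, add_sub_right_comm,
      map_add, map_smul]
    exact hline t

theorem DistAttained.eq_or_eq_neg_of_orthogonal {a a' d n m : F} {r : ℝ}
    (hLL : DistAttained (line a d) (line a' d) r) (hr : 0 < r) (hd : d ≠ 0) (hn : ‖n‖ = 1)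
    (hm : ‖m‖ = 1) (hdn : ⟪n, d⟫ = 0) (han : ⟪n, a' - a⟫ = 0) (hdm : ⟪m, d⟫ = 0)
    (ham : ⟪m, a' - a⟫ = 0) : m = n ∨ m = -n := by
  set u := (ℝ ∙ d)ᗮ.starProjection (a - a')
  have hu : u ≠ 0 := norm_pos_iff.mp (hLL.norm_starProjection_sub ▸ hr)
  have hux : ∀ x : F, ⟪x, d⟫ = 0 → ⟪x, a' - a⟫ = 0 → ⟪u, x⟫ = 0 := by
    intro x hdx hax
    rw [inner_starProjection_orthogonal_singleton_of_inner_eq_zero (by rwa [real_inner_comm]),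
      ← neg_sub, inner_neg_left, real_inner_comm, hax, neg_zero]
  exact eq_or_eq_neg_of_inner_eq_zero hd hu (inner_starProjection_orthogonal_singleton _ _) hn hm
    (by rwa [real_inner_comm]) (hux n hdn han) (by rwa [real_inner_comm]) (hux m hdm ham)

theorem DistAttained.exists_eq_smul_of_forall_inner_eq {a n p q e f : F} {c r : ℝ}
    (he : e ≠ 0) (hn : n ≠ 0) (hp : ∀ x ∈ line p e, ⟪x - a, n⟫ = c)
    (hq : ∀ x ∈ line q f, ⟪x - a, n⟫ = c) (h : DistAttained (line q f) (line p e) r)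
    (hr : 0 < r) : ∃ k : ℝ, f = k • e := by
  set P := (ℝ ∙ e)ᗮ.starProjection
  by_contra hpar
  have hPf : P f ≠ 0 := fun h₀ =>
    hpar (exists_eq_smul_of_starProjection_orthogonal_singleton_eq_zero h₀)
  obtain ⟨hnq, hnf⟩ := inner_starProjection_eq_zero_of_forall_inner_eq hp hq
  obtain ⟨k, hk⟩ := exists_eq_smul_of_inner_eq_zero he hn hPf (inner_eq_of_forall_mem_line hp).2
    (inner_starProjection_orthogonal_singleton e f) hnf
    (inner_starProjection_orthogonal_singleton e _) hnq
  -- the two lines meet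
  have := h.starProjection_line.1 _ (add_smul_mem_line _ _ (-k)) 0 rfl
  rw [hk, neg_smul, add_neg_cancel, dist_self] at this
  linarith

theorem false_of_distAttained_of_coplanar_parallel {a n e p₁ p₂ p₃ : F} {c r : ℝ}
    (he : e ≠ 0) (hn : n ≠ 0) (h₁ : ∀ x ∈ line p₁ e, ⟪x - a, n⟫ = c)
    (h₂ : ∀ x ∈ line p₂ e, ⟪x - a, n⟫ = c) (h₃ : ∀ x ∈ line p₃ e, ⟪x - a, n⟫ = c)
    (h₁₂ : DistAttained (line p₂ e) (line p₁ e) r) (h₁₃ : DistAttained (line p₃ e) (line p₁ e) r)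
    (h₂₃ : DistAttained (line p₃ e) (line p₂ e) r) (hr : 0 < r) : False := by
  have hg₂ := h₁₂.norm_starProjection_sub
  have hg₃ := h₁₃.norm_starProjection_sub
  have hg₂₃ := h₂₃.norm_starProjection_sub
  obtain ⟨k, hk⟩ := exists_eq_smul_of_inner_eq_zero he hn (norm_pos_iff.mp (hg₂ ▸ hr))
    (inner_eq_of_forall_mem_line h₁).2 (inner_starProjection_orthogonal_singleton e _)
    (inner_starProjection_eq_zero_of_forall_inner_eq h₁ h₂).1
    (inner_starProjection_orthogonal_singleton e _)
    (inner_starProjection_eq_zero_of_forall_inner_eq h₁ h₃).1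
  rw [← sub_sub_sub_cancel_right p₃ p₂ p₁, map_sub, hk,
    show ∀ g : F, k • g - g = (k - 1) • g from fun g => by module, norm_smul, hg₂,
    Real.norm_eq_abs] at hg₂₃
  rw [hk, norm_smul, hg₂, Real.norm_eq_abs] at hg₃
  -- three collinear points cannot be pairwise equidistant: `|k| = 1` and `|k - 1| = 1`
  have hk₁ : |k| = 1 := by nlinarith
  have hk₂ : |k - 1| = 1 := by nlinarith
  rcases abs_eq zero_le_one |>.mp hk₁ with rfl | rfl <;> norm_num at hk₂

theorem false_of_distAttained_of_coplanar {a n p₁ p₂ p₃ f₁ f₂ f₃ : F} {c r : ℝ}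
    (hf₁ : f₁ ≠ 0) (hf₂ : f₂ ≠ 0) (hf₃ : f₃ ≠ 0) (hn : n ≠ 0)
    (h₁ : ∀ x ∈ line p₁ f₁, ⟪x - a, n⟫ = c) (h₂ : ∀ x ∈ line p₂ f₂, ⟪x - a, n⟫ = c)
    (h₃ : ∀ x ∈ line p₃ f₃, ⟪x - a, n⟫ = c) (h₁₂ : DistAttained (line p₂ f₂) (line p₁ f₁) r)
    (h₁₃ : DistAttained (line p₃ f₃) (line p₁ f₁) r)
    (h₂₃ : DistAttained (line p₃ f₃) (line p₂ f₂) r) (hr : 0 < r) : False := by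
  obtain ⟨c₂, rfl⟩ := h₁₂.exists_eq_smul_of_forall_inner_eq hf₁ hn h₁ h₂ hr
  obtain ⟨c₃, rfl⟩ := h₁₃.exists_eq_smul_of_forall_inner_eq hf₁ hn h₁ h₃ hr
  rw [line_smul _ _ (left_ne_zero_of_smul hf₂)] at h₂ h₁₂ h₂₃
  rw [line_smul _ _ (left_ne_zero_of_smul hf₃)] at h₃ h₁₃ h₂₃
  exact false_of_distAttained_of_coplanar_parallel hf₁ hn h₁ h₂ h₃ h₁₂ h₁₃ h₂₃ hr

theorem card_le_two_of_pairwise_distAttained {ι : Type*} {p f : ι → F} {i j : ι} {c : ℝ}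
    (hij : i ≠ j) (hi : f i ≠ 0) (hj : f j ≠ 0) (hc : f j = c • f i)
    (hpair : ∀ k l, k ≠ l → DistAttained (line (p k) (f k)) (line (p l) (f l)) 1)
    {s : Finset ι} (hs : ∀ k ∈ s, ¬∃ c : ℝ, f k = c • f i) : s.card ≤ 2 := by
  by_contra! hcard
  obtain ⟨k₁, h₁, k₂, h₂, k₃, h₃, h₁₂, h₁₃, h₂₃⟩ := Finset.two_lt_card.mp hcard
  have hf : ∀ k ∈ s, f k ≠ 0 := fun k hk h₀ => hs k hk ⟨0, by rw [h₀, zero_smul]⟩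
  have hLj : line (p j) (f j) = line (p j) (f i) := by
    rw [hc, line_smul _ _ (left_ne_zero_of_smul (hc ▸ hj))]
  have hLL : DistAttained (line (p i) (f i)) (line (p j) (f i)) 1 := hLj ▸ hpair i j hij
  have hplane : ∀ k ∈ s, ∃ n : F, ‖n‖ = 1 ∧ ⟪n, f i⟫ = 0 ∧ ⟪n, p j - p i⟫ = 0 ∧
      ∀ x ∈ line (p k) (f k), ⟪x - p i, n⟫ = 1 := by
    intro k hk
    have hki : k ≠ i := by rintro rfl; exact hs k hk ⟨1, (one_smul ℝ _).symm⟩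
    have hkj : k ≠ j := by rintro rfl; exact hs k hk ⟨c, hc⟩
    exact (hLL.parallel_or_inner_eq_one hi (hpair k i hki) (hLj ▸ hpair k j hkj)).resolve_left
      (hs k hk)
  obtain ⟨n, hn, hin, hjn, hP₁⟩ := hplane k₁ h₁
  have hside : ∀ k ∈ s, k ≠ k₁ → ∀ x ∈ line (p k) (f k), ⟪x - p i, n⟫ = 1 := by
    intro k hk hk₁
    obtain ⟨m, hm, him, hjm, hPk⟩ := hplane k hk
    obtain rfl : m = n :=
      (hLL.eq_or_eq_neg_of_orthogonal one_pos hi hn hm hin hjn him hjm).resolve_right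
        (ne_neg_of_distAttained_of_forall_inner_eq_one hn hP₁ hPk (hpair k₁ k hk₁.symm)
          (by norm_num))
    exact hPk
  exact false_of_distAttained_of_coplanar (hf k₁ h₁) (hf k₂ h₂) (hf k₃ h₃)
    (norm_pos_iff.mp (hn ▸ one_pos)) hP₁ (hside k₂ h₂ h₁₂.symm) (hside k₃ h₃ h₁₃.symm)
    (hpair k₂ k₁ h₁₂.symm) (hpair k₃ k₁ h₁₃.symm) (hpair k₃ k₂ h₂₃.symm) one_pos

end ThreeDim

instance : Fact (finrank ℝ (EuclideanSpace ℝ (Fin 3)) = 3) := ⟨finrank_euclideanSpace_fin⟩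

/-- (a) If `L = {a + t·d}` and `L' = {a' + t·d}` are parallel lines in `ℝ³` at distance
exactly 1 (spanning a plane `P` through `a` with directions `d` and `a' - a`), then any
line `M` at distance exactly 1 from both `L` and `L'` is either parallel to `L` or lies
in one of the two planes parallel to `P` at distance 1 from `P` (expressed via a unit
normal `nv` of `P` with `⟪x - a, nv⟫ = 1` for all `x ∈ M`).
(b) Any collection of lines in `ℝ³` pairwise at distance exactly 1 that contains two
parallel lines and no third line parallel to them has at most 4 elements.
Here "distance exactly 1" means all pairwise point distances are `≥ 1` and distance 1
is attained. -/
theorem parallel_pair_structure :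
    (∀ (a a' d : EuclideanSpace ℝ (Fin 3)), d ≠ 0 →
      ∀ (L L' : Set (EuclideanSpace ℝ (Fin 3))),
      L = {x | ∃ t : ℝ, x = a + t • d} → L' = {x | ∃ t : ℝ, x = a' + t • d} →
      ((∀ x ∈ L, ∀ y ∈ L', 1 ≤ dist x y) ∧ (∃ x ∈ L, ∃ y ∈ L', dist x y = 1)) →
      ∀ (b dM : EuclideanSpace ℝ (Fin 3)), dM ≠ 0 →
      ∀ (M : Set (EuclideanSpace ℝ (Fin 3))), M = {x | ∃ t : ℝ, x = b + t • dM} →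
      ((∀ x ∈ M, ∀ y ∈ L, 1 ≤ dist x y) ∧ (∃ x ∈ M, ∃ y ∈ L, dist x y = 1)) →
      ((∀ x ∈ M, ∀ y ∈ L', 1 ≤ dist x y) ∧ (∃ x ∈ M, ∃ y ∈ L', dist x y = 1)) →
      (∃ c : ℝ, dM = c • d) ∨
      (∃ nv : EuclideanSpace ℝ (Fin 3), ‖nv‖ = 1 ∧ ⟪nv, d⟫ = 0 ∧ ⟪nv, a' - a⟫ = 0 ∧
        ∀ x ∈ M, ⟪x - a, nv⟫ = 1)) ∧
    (∀ (N : ℕ) (p d : Fin N → EuclideanSpace ℝ (Fin 3)), (∀ k, d k ≠ 0) →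
      ∀ L : Fin N → Set (EuclideanSpace ℝ (Fin 3)),
      (∀ k, L k = {x | ∃ t : ℝ, x = p k + t • d k}) →
      (∀ k l, k ≠ l →
        (∀ x ∈ L k, ∀ y ∈ L l, 1 ≤ dist x y) ∧ (∃ x ∈ L k, ∃ y ∈ L l, dist x y = 1)) →
      (∃ i j : Fin N, i ≠ j ∧ (∃ c : ℝ, d j = c • d i) ∧
        ∀ k, k ≠ i → k ≠ j → ¬ ∃ c : ℝ, d k = c • d i) →
      N ≤ 4) := by
  refine ⟨?_, ?_⟩
  · rintro a a' d hd L L' rfl rfl hLL b dM - M rfl hML hML'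
    exact DistAttained.parallel_or_inner_eq_one hd hLL hML hML'
  · rintro N p d hd L hL hdist ⟨i, j, hij, ⟨c, hc⟩, hno⟩
    obtain rfl : L = fun k => line (p k) (d k) := funext hL
    have hcard := card_le_two_of_pairwise_distAttained hij (hd i) (hd j) hc hdist
      (s := (Finset.univ.erase i).erase j)
      fun k hk => hno k (Finset.ne_of_mem_erase (Finset.mem_of_mem_erase hk))
        (Finset.ne_of_mem_erase hk)
    rw [Finset.card_erase_of_mem (by simp [hij.symm]), Finset.card_erase_of_mem
      (Finset.mem_univ i), Finset.card_univ, Fintype.card_fin] at hcard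
    omega
end
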